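/- arXiv:2511.17121 — 4 statements merged into one kernel-verified Lean document; each statement's English description precedes it below -/
import Mathlib

section
/- Positive definiteness of the coupled Riccati solution: suppose K solves the coupled Riccati system on [0,T] associated with a coefficient datum (A, B, C, Q, R, m, P) (so in particular Q(i) is positive semidefinite and R(i), P(i) are positive definite for every i ∈ S, and (m_{ij}) is a generator matrix). Then K(t,i) is a positive definite matrix for every i ∈ S and every t ∈ [0,T). -/
open Matrix Set Filter Topology

attribute [local instance] Matrix.normedAddCommGroup Matrix.normedSpace

noncomputable section

/-- Right-hand side of the coupled Riccati system associated with a coefficient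
datum `(A, B, C, Q, R, m)`, evaluated at the tuple of matrices `K : Fin N → Matrix`. -/
def riccatiRHS {d l N : ℕ}
    (A C : Fin N → Matrix (Fin d) (Fin d) ℝ)
    (B : Fin N → Matrix (Fin d) (Fin l) ℝ)
    (Q : Fin N → Matrix (Fin d) (Fin d) ℝ)
    (R : Fin N → Matrix (Fin l) (Fin l) ℝ)
    (m : Fin N → Fin N → ℝ)
    (K : Fin N → Matrix (Fin d) (Fin d) ℝ) (i : Fin N) :
    Matrix (Fin d) (Fin d) ℝ :=
  (C i)ᵀ * K i * C i + (A i)ᵀ * K i + K i * A i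
    - K i * B i * (R i)⁻¹ * (B i)ᵀ * K i + Q i + ∑ j, m i j • K j

/-- `K : ℝ → Fin N → Matrix` is a solution on `[0,T]` of the coupled Riccati
terminal value problem: it takes symmetric values, is differentiable in `t` with
`−K̇(t,i)` equal to the Riccati right-hand side, and satisfies `K(T,i) = P i`. -/
def IsRiccatiSolution {d l N : ℕ} (T : ℝ)
    (A C : Fin N → Matrix (Fin d) (Fin d) ℝ)
    (B : Fin N → Matrix (Fin d) (Fin l) ℝ)
    (Q : Fin N → Matrix (Fin d) (Fin d) ℝ)
    (R : Fin N → Matrix (Fin l) (Fin l) ℝ)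
    (m : Fin N → Fin N → ℝ)
    (P : Fin N → Matrix (Fin d) (Fin d) ℝ)
    (K : ℝ → Fin N → Matrix (Fin d) (Fin d) ℝ) : Prop :=
  (∀ t ∈ Icc (0:ℝ) T, ∀ i, (K t i).IsSymm) ∧
  (∀ t ∈ Icc (0:ℝ) T, ∀ i,
    HasDerivWithinAt (fun s => K s i)
      (-(riccatiRHS A C B Q R m (K t) i)) (Icc (0:ℝ) T) t) ∧
  (∀ i, K T i = P i)

lemma aux_entry_bound {d : ℕ} {x : Fin d → ℝ} (hx : x ⬝ᵥ x = 1) (p : Fin d) : |x p| ≤ 1 := by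
  rw [abs_le_one_iff_mul_self_le_one]
  calc x p * x p ≤ ∑ q, x q * x q :=
        Finset.single_le_sum (f := fun q => x q * x q) (fun q _ => mul_self_nonneg _)
          (Finset.mem_univ p)
    _ = 1 := hx

lemma aux_quad_bound {d : ℕ} (M : Matrix (Fin d) (Fin d) ℝ) {x : Fin d → ℝ} (hx : x ⬝ᵥ x = 1) :
    |x ⬝ᵥ M *ᵥ x| ≤ ∑ p, ∑ q, |M p q| := by
  refine (Finset.abs_sum_le_sum_abs _ _).trans (Finset.sum_le_sum fun p _ => ?_)
  rw [abs_mul]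
  have h1 : |(M *ᵥ x) p| ≤ ∑ q, |M p q| := by
    have e : (M *ᵥ x) p = ∑ q, M p q * x q := rfl
    rw [e]
    refine (Finset.abs_sum_le_sum_abs _ _).trans (Finset.sum_le_sum fun q _ => ?_)
    rw [abs_mul]
    exact mul_le_of_le_one_right (abs_nonneg _) (aux_entry_bound hx q)
  calc |x p| * |(M *ᵥ x) p| ≤ 1 * (∑ q, |M p q|) :=
        mul_le_mul (aux_entry_bound hx p) h1 (abs_nonneg _) zero_le_one
    _ = _ := one_mul _

lemma aux_dot_self_nonneg {d : ℕ} (y : Fin d → ℝ) : 0 ≤ y ⬝ᵥ y :=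
  Finset.sum_nonneg fun _ _ => mul_self_nonneg _

lemma aux_scale {d : ℕ} {M : Matrix (Fin d) (Fin d) ℝ} {c : ℝ}
    (h : ∀ x : Fin d → ℝ, x ⬝ᵥ x = 1 → c ≤ x ⬝ᵥ M *ᵥ x) (y : Fin d → ℝ) :
    c * (y ⬝ᵥ y) ≤ y ⬝ᵥ M *ᵥ y := by
  rcases eq_or_ne y 0 with rfl | hy
  · simp
  · have hyy : 0 < y ⬝ᵥ y :=
      lt_of_le_of_ne (aux_dot_self_nonneg y) (Ne.symm (fun h0 => hy (dotProduct_self_eq_zero.mp h0)))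
    set r : ℝ := Real.sqrt (y ⬝ᵥ y) with hrdef
    have hr : 0 < r := Real.sqrt_pos.mpr hyy
    have hr2 : r * r = y ⬝ᵥ y := Real.mul_self_sqrt hyy.le
    have hx : (r⁻¹ • y) ⬝ᵥ (r⁻¹ • y) = 1 := by
      rw [smul_dotProduct, dotProduct_smul, smul_eq_mul, smul_eq_mul, ← hr2]
      field_simp
    have h2 := h _ hx
    have hqm : (r⁻¹ • y) ⬝ᵥ M *ᵥ (r⁻¹ • y) = r⁻¹ * (r⁻¹ * (y ⬝ᵥ M *ᵥ y)) := by
      rw [mulVec_smul, smul_dotProduct, dotProduct_smul, smul_eq_mul, smul_eq_mul]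
    rw [hqm] at h2
    have hrne : r ≠ 0 := ne_of_gt hr
    calc c * (y ⬝ᵥ y) = (r * r) * c := by rw [← hr2]; ring
      _ ≤ (r * r) * (r⁻¹ * (r⁻¹ * (y ⬝ᵥ M *ᵥ y))) :=
          mul_le_mul_of_nonneg_left h2 (by positivity)
      _ = y ⬝ᵥ M *ᵥ y := by field_simp

lemma aux_herm {d : ℕ} {M : Matrix (Fin d) (Fin d) ℝ} (h : M.IsSymm) : M.IsHermitian := by
  rw [Matrix.IsHermitian, Matrix.conjTranspose_eq_transpose_of_trivial]; exact h

lemma aux_psd_kernel {d : ℕ} {M : Matrix (Fin d) (Fin d) ℝ} (hM : M.PosSemidef) {x : Fin d → ℝ}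
    (h : x ⬝ᵥ M *ᵥ x = 0) : M *ᵥ x = 0 := by
  have hsx : star x = x := funext fun q => star_trivial _
  exact (hM.dotProduct_mulVec_zero_iff x).mp (by rw [hsx]; exact h)


set_option maxHeartbeats 1000000

/-- Positive definiteness of the coupled Riccati solution on `[0,T)`. -/
theorem riccati_posDef
    (d l N : ℕ) (hd : 0 < d) (hl : 0 < l) (hN : 0 < N)
    (T : ℝ) (hT : 0 < T)
    (A C Q P : Fin N → Matrix (Fin d) (Fin d) ℝ)
    (B : Fin N → Matrix (Fin d) (Fin l) ℝ)
    (R : Fin N → Matrix (Fin l) (Fin l) ℝ)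
    (m : Fin N → Fin N → ℝ)
    (hQ : ∀ i, (Q i).PosSemidef)
    (hR : ∀ i, (R i).PosDef)
    (hP : ∀ i, (P i).PosDef)
    (hm₁ : ∀ i j, i ≠ j → 0 ≤ m i j)
    (hm₂ : ∀ i, ∑ j, m i j = 0)
    (K : ℝ → Fin N → Matrix (Fin d) (Fin d) ℝ)
    (hK : IsRiccatiSolution T A C B Q R m P K) :
    ∀ t ∈ Ico (0:ℝ) T, ∀ i, (K t i).PosDef := by

  obtain ⟨hSymm, hDeriv, hTerm⟩ := hK
  simp only [riccatiRHS] at hDeriv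
  have hstar : ∀ y : Fin d → ℝ, star y = y := fun y => funext fun q => star_trivial _
  set Sph : Set (Fin d → ℝ) := {x | x ⬝ᵥ x = 1} with hSphdef
  have hSphClosed : IsClosed Sph :=
    isClosed_eq (continuous_id.dotProduct continuous_id) continuous_const
  have hSphCompact : IsCompact Sph := by
    refine Metric.isCompact_of_isClosed_isBounded hSphClosed ?_
    refine (Metric.isBounded_closedBall (x := (0 : Fin d → ℝ)) (r := 1)).subset ?_
    intro x hx
    rw [Metric.mem_closedBall, dist_zero_right]
    refine (pi_norm_le_iff_of_nonneg zero_le_one).mpr fun p => ?_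
    rw [Real.norm_eq_abs]
    exact aux_entry_bound hx p
  have hSphNe : Sph.Nonempty := by
    refine ⟨Pi.single (⟨0, hd⟩ : Fin d) (1:ℝ), ?_⟩
    show (Pi.single (⟨0, hd⟩ : Fin d) (1:ℝ)) ⬝ᵥ (Pi.single (⟨0, hd⟩ : Fin d) (1:ℝ)) = 1
    simp [dotProduct, Pi.single_apply]
  have hKcont : ∀ i, ContinuousOn (fun t => K t i) (Icc (0:ℝ) T) :=
    fun i t ht => (hDeriv t ht i).continuousWithinAt
  -- the constant ε
  have hmin : ∀ i, ∃ mv : ℝ, 0 < mv ∧ ∀ x ∈ Sph, mv ≤ x ⬝ᵥ P i *ᵥ x := by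
    intro i
    obtain ⟨x0, hx0S, hx0min⟩ := hSphCompact.exists_isMinOn hSphNe
      ((continuous_id.dotProduct (continuous_const.matrix_mulVec continuous_id)).continuousOn)
    refine ⟨x0 ⬝ᵥ P i *ᵥ x0, ?_, fun x hx => (isMinOn_iff.mp hx0min) x hx⟩
    have hx0ne : x0 ≠ 0 := by
      intro h0
      have : x0 ⬝ᵥ x0 = 1 := hx0S
      rw [h0] at this
      simp at this
    have := (hP i).dotProduct_mulVec_pos hx0ne
    rwa [hstar x0] at this
  choose μ hμpos hμle using hmin
  have hNne : (Finset.univ : Finset (Fin N)).Nonempty := ⟨⟨0, hN⟩, Finset.mem_univ _⟩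
  set ε : ℝ := (Finset.univ.inf' hNne μ) / 2 with hεdef
  have hεpos : 0 < ε := by
    have h1 : 0 < Finset.univ.inf' hNne μ := (Finset.lt_inf'_iff _).2 fun i _ => hμpos i
    rw [hεdef]; linarith
  have hεP : ∀ i, ∀ x ∈ Sph, 2 * ε ≤ x ⬝ᵥ P i *ᵥ x := by
    intro i x hx
    have h1 : Finset.univ.inf' hNne μ ≤ μ i := Finset.inf'_le _ (Finset.mem_univ i)
    have h2 := hμle i x hx
    rw [hεdef]; linarith
  -- the constants a and b
  set a : ℝ := ∑ i', ∑ p, ∑ q, |A i' p q| with hadef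
  have ha0 : 0 ≤ a := Finset.sum_nonneg fun _ _ => Finset.sum_nonneg fun _ _ => Finset.sum_nonneg fun _ _ => abs_nonneg _
  have haA : ∀ i, ∀ x ∈ Sph, |x ⬝ᵥ A i *ᵥ x| ≤ a := by
    intro i x hx
    refine (aux_quad_bound (A i) hx).trans ?_
    exact Finset.single_le_sum (f := fun i' => ∑ p, ∑ q, |A i' p q|)
      (fun i' _ => Finset.sum_nonneg fun _ _ => Finset.sum_nonneg fun _ _ => abs_nonneg _)
      (Finset.mem_univ i)
  set W : Fin N → Matrix (Fin d) (Fin d) ℝ := fun i' => B i' * (R i')⁻¹ * (B i')ᵀ with hWdef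
  set b : ℝ := ∑ i', ∑ p, ∑ q, |W i' p q| with hbdef
  have hb0 : 0 ≤ b := Finset.sum_nonneg fun _ _ => Finset.sum_nonneg fun _ _ => Finset.sum_nonneg fun _ _ => abs_nonneg _
  have hbW : ∀ i, ∀ x ∈ Sph, |x ⬝ᵥ W i *ᵥ x| ≤ b := by
    intro i x hx
    refine (aux_quad_bound (W i) hx).trans ?_
    exact Finset.single_le_sum (f := fun i' => ∑ p, ∑ q, |W i' p q|)
      (fun i' _ => Finset.sum_nonneg fun _ _ => Finset.sum_nonneg fun _ _ => abs_nonneg _)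
      (Finset.mem_univ i)
  set L : ℝ := 2 * a + ε * b + 1 with hLdef
  have hεb : 0 ≤ ε * b := mul_nonneg hεpos.le hb0
  have hL0 : 0 < L := by rw [hLdef]; linarith
  -- the barrier
  set φ : ℝ → ℝ := fun t => -ε * Real.exp (L * (t - T)) with hφdef
  have hφcont : Continuous φ := by
    rw [hφdef]
    exact continuous_const.mul (Real.continuous_exp.comp
      (continuous_const.mul (continuous_id.sub continuous_const)))
  have hφneg : ∀ t, φ t < 0 := by
    intro t
    have h1 := Real.exp_pos (L * (t - T))
    rw [hφdef]
    simp only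
    nlinarith
  have hφd : ∀ t : ℝ, HasDerivAt φ (L * φ t) t := by
    intro t
    have h1 : HasDerivAt (fun s : ℝ => L * (s - T)) L t := by
      simpa using ((hasDerivAt_id t).sub_const T).const_mul L
    have h2 := h1.exp
    have h3 := h2.const_mul (-ε)
    have h4 : L * φ t = -ε * (Real.exp (L * (t - T)) * L) := by
      rw [hφdef]
      simp only
      ring
    rw [h4]; exact h3
  have hφbound : ∀ t, t ≤ T → -φ t ≤ ε := by
    intro t ht
    have h1 : Real.exp (L * (t - T)) ≤ 1 := Real.exp_le_one_iff.mpr (by nlinarith)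
    have h2 := Real.exp_pos (L * (t - T))
    rw [hφdef]
    simp only
    nlinarith
  -- the bad set
  set Ei : Fin N → Set ℝ := fun i => Prod.fst ''
    (((Icc (0:ℝ) T) ×ˢ Sph) ∩ {p : ℝ × (Fin d → ℝ) | φ p.1 + p.2 ⬝ᵥ (K p.1 i) *ᵥ p.2 ≤ 0})
    with hEidef
  set E : Set ℝ := ⋃ i, Ei i with hEdef
  have hgcont : ∀ i, ContinuousOn (fun p : ℝ × (Fin d → ℝ) => φ p.1 + p.2 ⬝ᵥ (K p.1 i) *ᵥ p.2)
      ((Icc (0:ℝ) T) ×ˢ Sph) := by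
    intro i
    refine ContinuousOn.add ((hφcont.comp continuous_fst).continuousOn) ?_
    have hc : Continuous (fun q : (Matrix (Fin d) (Fin d) ℝ) × (Fin d → ℝ) => q.2 ⬝ᵥ q.1 *ᵥ q.2) :=
      continuous_snd.dotProduct (continuous_fst.matrix_mulVec continuous_snd)
    have hm : ContinuousOn (fun p : ℝ × (Fin d → ℝ) => ((K p.1 i), p.2))
        ((Icc (0:ℝ) T) ×ˢ Sph) := by
      refine ContinuousOn.prodMk ?_ continuous_snd.continuousOn
      exact (hKcont i).comp continuousOn_fst (fun p hp => hp.1)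
    exact hc.comp_continuousOn hm
  have hEicomp : ∀ i, IsCompact (Ei i) := by
    intro i
    refine IsCompact.image ?_ continuous_fst
    refine IsCompact.of_isClosed_subset (isCompact_Icc.prod hSphCompact) ?_ inter_subset_left
    exact (hgcont i).preimage_isClosed_of_isClosed (isClosed_Icc.prod hSphClosed) isClosed_Iic
  have hEcomp : IsCompact E := isCompact_iUnion hEicomp
  have hEsub : E ⊆ Icc (0:ℝ) T := by
    refine iUnion_subset fun i => ?_
    rintro t ⟨p, hp, rfl⟩
    exact hp.1.1
  -- the key claim
  have key : ∀ t ∈ Icc (0:ℝ) T, ∀ i, ∀ x ∈ Sph, 0 < φ t + x ⬝ᵥ (K t i) *ᵥ x := by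
    by_contra hcon
    push_neg at hcon
    obtain ⟨t0, ht0, i0, x0, hx0, hc0⟩ := hcon
    have hEne : E.Nonempty := ⟨t0, mem_iUnion.mpr ⟨i0, ⟨(t0, x0), ⟨⟨ht0, hx0⟩, hc0⟩, rfl⟩⟩⟩
    set ts : ℝ := sSup E with htsdef
    have htsE : ts ∈ E := hEcomp.sSup_mem hEne
    have htsIcc : ts ∈ Icc (0:ℝ) T := hEsub htsE
    have hub : ∀ s ∈ E, s ≤ ts := fun s hs => le_csSup hEcomp.bddAbove hs
    have hTnotE : T ∉ E := by
      intro hTE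
      obtain ⟨i, hTi⟩ := mem_iUnion.mp hTE
      obtain ⟨p, ⟨⟨hpIcc, hpS⟩, hple⟩, hp1⟩ := hTi
      simp only [mem_setOf_eq] at hple
      rw [hp1] at hple
      rw [hTerm i] at hple
      have h2 : 2 * ε ≤ p.2 ⬝ᵥ P i *ᵥ p.2 := hεP i p.2 hpS
      have hφT : φ T = -ε := by rw [hφdef]; simp
      linarith
    have htsT : ts < T := lt_of_le_of_ne htsIcc.2 (fun h => hTnotE (h ▸ htsE))
    set lam : ℝ := -φ ts with hlamdef
    have hlampos : 0 < lam := by rw [hlamdef]; linarith [hφneg ts]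
    have hlamle : lam ≤ ε := by rw [hlamdef]; exact hφbound ts htsIcc.2
    have hAfter : ∀ s, ts < s → s ≤ T → ∀ j, ∀ y ∈ Sph, 0 < φ s + y ⬝ᵥ (K s j) *ᵥ y := by
      intro s hs1 hs2 j y hy
      by_contra hle
      push_neg at hle
      have hsE : s ∈ E :=
        mem_iUnion.mpr ⟨j, ⟨(s, y), ⟨⟨⟨le_trans htsIcc.1 hs1.le, hs2⟩, hy⟩, hle⟩, rfl⟩⟩
      exact absurd (hub s hsE) (not_le.mpr hs1)
    haveI hNB : (𝓝[Ioc ts T] ts).NeBot := by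
      rw [nhdsWithin_Ioc_eq_nhdsGT htsT]; infer_instance
    have hAt : ∀ j, ∀ y ∈ Sph, lam ≤ y ⬝ᵥ (K ts j) *ᵥ y := by
      intro j y hy
      have hcy : Continuous (fun M : Matrix (Fin d) (Fin d) ℝ => y ⬝ᵥ M *ᵥ y) :=
        continuous_const.dotProduct (continuous_id.matrix_mulVec continuous_const)
      have hu : ContinuousWithinAt (fun s : ℝ => φ s + y ⬝ᵥ (K s j) *ᵥ y) (Icc (0:ℝ) T) ts :=
        (hφcont.continuousWithinAt).add ((hcy.comp_continuousOn (hKcont j)) ts htsIcc)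
      have hu2 : Tendsto (fun s : ℝ => φ s + y ⬝ᵥ (K s j) *ᵥ y) (𝓝[Ioc ts T] ts)
          (𝓝 (φ ts + y ⬝ᵥ (K ts j) *ᵥ y)) :=
        hu.mono (fun z hz => ⟨le_trans htsIcc.1 hz.1.le, hz.2⟩)
      have h0 : 0 ≤ φ ts + y ⬝ᵥ (K ts j) *ᵥ y := by
        refine ge_of_tendsto hu2 ?_
        filter_upwards [self_mem_nhdsWithin] with z hz
        exact (hAfter z hz.1 hz.2 j y hy).le
      rw [hlamdef]; linarith
    -- the touching witness
    obtain ⟨i, hi⟩ := mem_iUnion.mp htsE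
    obtain ⟨p, ⟨⟨hpIcc, hpS⟩, hple⟩, hp1⟩ := hi
    simp only [mem_setOf_eq] at hple
    rw [hp1] at hple
    set x : Fin d → ℝ := p.2 with hxdef
    have hxS : x ∈ Sph := hpS
    have hxSph : x ⬝ᵥ x = 1 := hxS
    have hlameq : x ⬝ᵥ (K ts i) *ᵥ x = lam :=
      le_antisymm (by rw [hlamdef]; linarith) (hAt i x hxS)
    -- positive semidefiniteness at the touching time
    have hKpsd : ∀ j, (K ts j).PosSemidef := by
      intro j
      refine PosSemidef.of_dotProduct_mulVec_nonneg (aux_herm (hSymm ts htsIcc j)) fun y => ?_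
      rw [hstar y]
      have h1 := aux_scale (M := K ts j) (c := lam) (fun z hz => hAt j z hz) y
      nlinarith [aux_dot_self_nonneg y, hlampos]
    have hMpsd : (K ts i - lam • (1 : Matrix (Fin d) (Fin d) ℝ)).PosSemidef := by
      refine PosSemidef.of_dotProduct_mulVec_nonneg ?_ ?_
      · rw [Matrix.IsHermitian, conjTranspose_eq_transpose_of_trivial, transpose_sub,
          transpose_smul, transpose_one]
        rw [hSymm ts htsIcc i]
      · intro y
        rw [hstar y, sub_mulVec, smul_mulVec, one_mulVec, dotProduct_sub, dotProduct_smul,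
          smul_eq_mul]
        have h1 := aux_scale (M := K ts i) (c := lam) (fun z hz => hAt i z hz) y
        linarith
    have hx0 : x ⬝ᵥ (K ts i - lam • (1 : Matrix (Fin d) (Fin d) ℝ)) *ᵥ x = 0 := by
      rw [sub_mulVec, smul_mulVec, one_mulVec, dotProduct_sub, dotProduct_smul,
        smul_eq_mul, hlameq, hxSph]
      ring
    have hEig : (K ts i) *ᵥ x = lam • x := by
      have h1 := aux_psd_kernel hMpsd hx0
      rw [sub_mulVec, smul_mulVec, one_mulVec, sub_eq_zero] at h1
      exact h1
    -- the quadratic-form linear functional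
    set Lm : Matrix (Fin d) (Fin d) ℝ →ₗ[ℝ] ℝ :=
      { toFun := fun M => x ⬝ᵥ M *ᵥ x
        map_add' := fun M N => by
          show x ⬝ᵥ (M + N) *ᵥ x = x ⬝ᵥ M *ᵥ x + x ⬝ᵥ N *ᵥ x
          rw [add_mulVec, dotProduct_add]
        map_smul' := fun c M => by
          show x ⬝ᵥ (c • M) *ᵥ x = (RingHom.id ℝ) c • (x ⬝ᵥ M *ᵥ x)
          rw [smul_mulVec, dotProduct_smul]
          rfl } with hLmdef
    have hLmapp : ∀ M, Lm M = x ⬝ᵥ M *ᵥ x := fun M => rfl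
    -- derivative of the touching function
    have htsIcc' : Icc ts T ⊆ Icc (0:ℝ) T := Icc_subset_Icc htsIcc.1 le_rfl
    have hKd := (hDeriv ts htsIcc i).mono htsIcc'
    have hLd : HasDerivWithinAt (fun t => Lm (K t i))
        (Lm (-((C i)ᵀ * K ts i * C i + (A i)ᵀ * K ts i + K ts i * A i
            - K ts i * B i * (R i)⁻¹ * (B i)ᵀ * K ts i + Q i + ∑ j, m i j • K ts j)))
        (Icc ts T) ts :=
      (LinearMap.toContinuousLinearMap Lm).hasFDerivAt.comp_hasDerivWithinAt ts hKd
    have hpd : HasDerivWithinAt (fun t => φ t + Lm (K t i))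
        (L * φ ts + Lm (-((C i)ᵀ * K ts i * C i + (A i)ᵀ * K ts i + K ts i * A i
            - K ts i * B i * (R i)⁻¹ * (B i)ᵀ * K ts i + Q i + ∑ j, m i j • K ts j)))
        (Icc ts T) ts :=
      ((hφd ts).hasDerivWithinAt).add hLd
    have hslope : 0 ≤ L * φ ts + Lm (-((C i)ᵀ * K ts i * C i + (A i)ᵀ * K ts i + K ts i * A i
        - K ts i * B i * (R i)⁻¹ * (B i)ᵀ * K ts i + Q i + ∑ j, m i j • K ts j)) := by
      rw [hasDerivWithinAt_iff_tendsto_slope, Icc_diff_left] at hpd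
      refine ge_of_tendsto hpd ?_
      filter_upwards [self_mem_nhdsWithin] with z hz
      have hpz : 0 < φ z + Lm (K z i) := by
        rw [hLmapp]
        exact hAfter z hz.1 hz.2 i x hxS
      have hpt : φ ts + Lm (K ts i) = 0 := by
        rw [hLmapp, hlameq, hlamdef]; ring
      rw [slope_def_field]
      apply div_nonneg
      · linarith
      · linarith [hz.1]
    -- expansion of the right-hand side
    have hexp : Lm ((C i)ᵀ * K ts i * C i + (A i)ᵀ * K ts i + K ts i * A i
        - K ts i * B i * (R i)⁻¹ * (B i)ᵀ * K ts i + Q i + ∑ j, m i j • K ts j) =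
        Lm ((C i)ᵀ * K ts i * C i) + Lm ((A i)ᵀ * K ts i) + Lm (K ts i * A i)
          - Lm (K ts i * B i * (R i)⁻¹ * (B i)ᵀ * K ts i) + Lm (Q i)
          + ∑ j, m i j * Lm (K ts j) := by
      simp [map_add, map_sub, map_sum, _root_.map_smul, smul_eq_mul]
    -- term estimates
    have hT1 : 0 ≤ Lm ((C i)ᵀ * K ts i * C i) := by
      have he : Lm ((C i)ᵀ * K ts i * C i) = (C i *ᵥ x) ⬝ᵥ (K ts i) *ᵥ (C i *ᵥ x) := by
        rw [hLmapp, mul_assoc, ← mulVec_mulVec, dotProduct_mulVec, vecMul_transpose,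
          ← mulVec_mulVec]
      rw [he]
      have := (hKpsd i).dotProduct_mulVec_nonneg (C i *ᵥ x)
      rwa [hstar _] at this
    have hT2 : Lm ((A i)ᵀ * K ts i) = lam * (x ⬝ᵥ A i *ᵥ x) := by
      rw [hLmapp, ← mulVec_mulVec, hEig, mulVec_smul, dotProduct_smul, smul_eq_mul,
        dotProduct_mulVec, vecMul_transpose, dotProduct_comm]
    have hKsymmT : (K ts i)ᵀ = K ts i := hSymm ts htsIcc i
    have hvKt : x ᵥ* (K ts i) = lam • x := by
      nth_rewrite 1 [← hKsymmT]
      rw [vecMul_transpose, hEig]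
    have hT3 : Lm (K ts i * A i) = lam * (x ⬝ᵥ A i *ᵥ x) := by
      rw [hLmapp, ← mulVec_mulVec, dotProduct_mulVec, hvKt, smul_dotProduct, smul_eq_mul]
    have hT4 : Lm (K ts i * B i * (R i)⁻¹ * (B i)ᵀ * K ts i)
        = lam * (lam * (x ⬝ᵥ (W i) *ᵥ x)) := by
      have hassoc : K ts i * B i * (R i)⁻¹ * (B i)ᵀ * K ts i = K ts i * (W i * K ts i) := by
        simp only [hWdef]
        simp only [Matrix.mul_assoc]
      rw [hLmapp, hassoc, ← mulVec_mulVec, dotProduct_mulVec, hvKt, smul_dotProduct, smul_eq_mul,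
        ← mulVec_mulVec, hEig, mulVec_smul, dotProduct_smul, smul_eq_mul]
    have hT5 : 0 ≤ Lm (Q i) := by
      have := (hQ i).dotProduct_mulVec_nonneg x
      rw [hstar x] at this
      rw [hLmapp]
      exact this
    have hT6 : 0 ≤ ∑ j, m i j * Lm (K ts j) := by
      have hv : ∀ j, lam ≤ Lm (K ts j) := fun j => by rw [hLmapp]; exact hAt j x hxS
      have hveq : Lm (K ts i) = lam := by rw [hLmapp]; exact hlameq
      have hsum : ∑ j, m i j * Lm (K ts j) = ∑ j, m i j * (Lm (K ts j) - lam) := by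
        have h1 : ∑ j, m i j * Lm (K ts j)
            = (∑ j, m i j * (Lm (K ts j) - lam)) + (∑ j, m i j) * lam := by
          rw [Finset.sum_mul, ← Finset.sum_add_distrib]
          exact Finset.sum_congr rfl fun j _ => by ring
        rw [h1, hm₂ i, zero_mul, add_zero]
      rw [hsum]
      refine Finset.sum_nonneg fun j _ => ?_
      rcases eq_or_ne j i with rfl | hne
      · rw [hveq]; simp
      · exact mul_nonneg (hm₁ i j (Ne.symm hne)) (by linarith [hv j])
    have hqAa : |x ⬝ᵥ A i *ᵥ x| ≤ a := haA i x hxS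
    have hqWb : |x ⬝ᵥ (W i) *ᵥ x| ≤ b := hbW i x hxS
    have h1 := abs_le.mp hqAa
    have h2 := abs_le.mp hqWb
    have e1 : -(lam * a) ≤ lam * (x ⬝ᵥ A i *ᵥ x) := by nlinarith
    have e2a : lam * (x ⬝ᵥ (W i) *ᵥ x) ≤ lam * b := mul_le_mul_of_nonneg_left h2.2 hlampos.le
    have e2b : lam * b ≤ ε * b := mul_le_mul_of_nonneg_right hlamle hb0
    have e2 : lam * (lam * (x ⬝ᵥ (W i) *ᵥ x)) ≤ lam * (ε * b) :=
      mul_le_mul_of_nonneg_left (e2a.trans e2b) hlampos.le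
    have hRHSlb : -(lam * (2 * a + ε * b)) ≤ Lm ((C i)ᵀ * K ts i * C i + (A i)ᵀ * K ts i
        + K ts i * A i - K ts i * B i * (R i)⁻¹ * (B i)ᵀ * K ts i + Q i
        + ∑ j, m i j • K ts j) := by
      rw [hexp, hT2, hT3, hT4]
      have hsplit : -(lam * (2 * a + ε * b))
          = -(lam * a) + -(lam * a) + -(lam * (ε * b)) := by ring
      linarith
    rw [map_neg] at hslope
    have hφts : φ ts = -lam := by rw [hlamdef]; ring
    rw [hφts, hLdef] at hslope
    nlinarith
  -- conclusion
  intro t ht i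
  have htIcc : t ∈ Icc (0:ℝ) T := ⟨ht.1, ht.2.le⟩
  refine PosDef.of_dotProduct_mulVec_pos (aux_herm (hSymm t htIcc i)) fun y hy => ?_
  rw [hstar y]
  have h1 : ∀ z : Fin d → ℝ, z ⬝ᵥ z = 1 → (-φ t) ≤ z ⬝ᵥ (K t i) *ᵥ z :=
    fun z hz => by linarith [key t htIcc i z hz]
  have h2 := aux_scale h1 y
  have hyy : 0 < y ⬝ᵥ y :=
    lt_of_le_of_ne (aux_dot_self_nonneg y)
      (Ne.symm fun h0 => hy (dotProduct_self_eq_zero.mp h0))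
  have hφ : 0 < -φ t := by linarith [hφneg t]
  calc (0:ℝ) < (-φ t) * (y ⬝ᵥ y) := mul_pos hφ hyy
    _ ≤ y ⬝ᵥ (K t i) *ᵥ y := h2
end
end

section
/- Identification of uniform limits of approximating Riccati solutions: let (A_n, B_n, C_n, Q_n, R_n, m^n), n ∈ ℕ, be coefficient data all having the same terminal matrices P(i), and suppose that for every i, j ∈ S one has A_n(i) → A(i), B_n(i) → B(i), C_n(i) → C(i), Q_n(i) → Q(i), R_n(i) → R(i), and m^n_{ij} → m_{ij} as n → ∞, where (A, B, C, Q, R, m, P) is itself a coefficient datum (in particular each R(i) is positive definite). Let K_n solve the coupled Riccati system associated with the n-th datum, and suppose that along a subsequence (n_k) the functions K_{n_k}(·,i) converge uniformly on [0,T] to functions K̂(·,i) for every i ∈ S. Then K̂ takes symmetric values, is differentiable in t, and is a solution of the coupled Riccati system associated with (A, B, C, Q, R, m, P), i.e. −d/dt K̂(t,i) = C(i)ᵀK̂(t,i)C(i) + A(i)ᵀK̂(t,i) + K̂(t,i)A(i) − K̂(t,i)B(i)R(i)⁻¹B(i)ᵀK̂(t,i) + Q(i) + Σ_{j∈S} m_{ij}K̂(t,j)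 on [0,T] with K̂(T,i) = P(i). -/
open Matrix Set Filter Topology MeasureTheory intervalIntegral

attribute [local instance] Matrix.normedAddCommGroup Matrix.normedSpace

set_option maxHeartbeats 1000000

open scoped Interval


noncomputable section

/-! ### Auxiliary lemmas -/

lemma tendsto_matrix_inv' {n : ℕ} {ι : Type*} {F : Filter ι}
    {R : ι → Matrix (Fin n) (Fin n) ℝ} {R' : Matrix (Fin n) (Fin n) ℝ}
    (h : Tendsto R F (𝓝 R')) (hdet : R'.det ≠ 0) :
    Tendsto (fun k => (R k)⁻¹) F (𝓝 R'⁻¹) := by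
  simp only [Matrix.inv_def, Ring.inverse_eq_inv']
  have hdet' : Tendsto (fun k => (R k).det) F (𝓝 R'.det) :=
    ((continuous_id.matrix_det).tendsto R').comp h
  have hadj : Tendsto (fun k => (R k).adjugate) F (𝓝 R'.adjugate) :=
    ((continuous_id.matrix_adjugate).tendsto R').comp h
  exact (hdet'.inv₀ hdet).smul hadj

lemma tendsto_matrix_mul' {a b c : ℕ} {ι : Type*} {F : Filter ι}
    {X : ι → Matrix (Fin a) (Fin b) ℝ} {Y : ι → Matrix (Fin b) (Fin c) ℝ}
    {X' : Matrix (Fin a) (Fin b) ℝ} {Y' : Matrix (Fin b) (Fin c) ℝ}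
    (hX : Tendsto X F (𝓝 X')) (hY : Tendsto Y F (𝓝 Y')) :
    Tendsto (fun k => X k * Y k) F (𝓝 (X' * Y')) := by
  have hc : Continuous (fun p : Matrix (Fin a) (Fin b) ℝ × Matrix (Fin b) (Fin c) ℝ => p.1 * p.2) :=
    continuous_fst.matrix_mul continuous_snd
  exact (hc.tendsto (X', Y')).comp (hX.prodMk_nhds hY)

lemma tendsto_matrix_transpose' {a b : ℕ} {ι : Type*} {F : Filter ι}
    {X : ι → Matrix (Fin a) (Fin b) ℝ} {X' : Matrix (Fin a) (Fin b) ℝ}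
    (hX : Tendsto X F (𝓝 X')) :
    Tendsto (fun k => (X k)ᵀ) F (𝓝 X'ᵀ) :=
  ((continuous_id.matrix_transpose).tendsto X').comp hX

lemma matrix_norm_mul_le' {a b c : ℕ} (A : Matrix (Fin a) (Fin b) ℝ)
    (B : Matrix (Fin b) (Fin c) ℝ) : ‖A * B‖ ≤ b * ‖A‖ * ‖B‖ := by
  have hb : (0:ℝ) ≤ (b : ℝ) * ‖A‖ * ‖B‖ := by positivity
  rw [Matrix.norm_le_iff hb]
  intro i j
  calc ‖(A * B) i j‖ = ‖∑ k, A i k * B k j‖ := by rw [Matrix.mul_apply]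
    _ ≤ ∑ k, ‖A i k * B k j‖ := norm_sum_le _ _
    _ ≤ ∑ _k : Fin b, ‖A‖ * ‖B‖ := Finset.sum_le_sum fun k _ => by
        rw [norm_mul]
        exact mul_le_mul (A.norm_entry_le_entrywise_sup_norm)
          (B.norm_entry_le_entrywise_sup_norm) (norm_nonneg _) (norm_nonneg _)
    _ = b * ‖A‖ * ‖B‖ := by simp [mul_assoc]

lemma tendsto_riccatiRHS {d l N : ℕ} {ι : Type*} {F : Filter ι}
    {A C Q : ι → Fin N → Matrix (Fin d) (Fin d) ℝ}
    {B : ι → Fin N → Matrix (Fin d) (Fin l) ℝ}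
    {R : ι → Fin N → Matrix (Fin l) (Fin l) ℝ}
    {m : ι → Fin N → Fin N → ℝ}
    {K : ι → Fin N → Matrix (Fin d) (Fin d) ℝ}
    {A' C' Q' : Fin N → Matrix (Fin d) (Fin d) ℝ}
    {B' : Fin N → Matrix (Fin d) (Fin l) ℝ}
    {R' : Fin N → Matrix (Fin l) (Fin l) ℝ}
    {m' : Fin N → Fin N → ℝ}
    {K' : Fin N → Matrix (Fin d) (Fin d) ℝ}
    (i : Fin N)
    (hA : Tendsto (fun k => A k i) F (𝓝 (A' i)))
    (hB : Tendsto (fun k => B k i) F (𝓝 (B' i)))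
    (hC : Tendsto (fun k => C k i) F (𝓝 (C' i)))
    (hQ : Tendsto (fun k => Q k i) F (𝓝 (Q' i)))
    (hRinv : Tendsto (fun k => (R k i)⁻¹) F (𝓝 ((R' i)⁻¹)))
    (hm : ∀ j, Tendsto (fun k => m k i j) F (𝓝 (m' i j)))
    (hK : ∀ j, Tendsto (fun k => K k j) F (𝓝 (K' j))) :
    Tendsto (fun k => riccatiRHS (A k) (C k) (B k) (Q k) (R k) (m k) (K k) i) F
      (𝓝 (riccatiRHS A' C' B' Q' R' m' K' i)) := by
  unfold riccatiRHS
  have h1 := tendsto_matrix_mul' (tendsto_matrix_mul' (tendsto_matrix_transpose' hC) (hK i)) hC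
  have h2 := tendsto_matrix_mul' (tendsto_matrix_transpose' hA) (hK i)
  have h3 := tendsto_matrix_mul' (hK i) hA
  have h4 := tendsto_matrix_mul' (tendsto_matrix_mul' (tendsto_matrix_mul'
    (tendsto_matrix_mul' (hK i) hB) hRinv) (tendsto_matrix_transpose' hB)) (hK i)
  have h6 : Tendsto (fun k => ∑ j, m k i j • K k j) F (𝓝 (∑ j, m' i j • K' j)) :=
    tendsto_finset_sum _ fun j _ => (hm j).smul (hK j)
  exact ((((h1.add h2).add h3).sub h4).add hQ).add h6

/-- Identification of uniform limits of approximating Riccati solutions. -/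
theorem riccati_limit_identification
    (d l N : ℕ) (hd : 0 < d) (hl : 0 < l) (hN : 0 < N)
    (T : ℝ) (hT : 0 < T)
    (A C Q : ℕ → Fin N → Matrix (Fin d) (Fin d) ℝ)
    (B : ℕ → Fin N → Matrix (Fin d) (Fin l) ℝ)
    (R : ℕ → Fin N → Matrix (Fin l) (Fin l) ℝ)
    (m : ℕ → Fin N → Fin N → ℝ)
    (P : Fin N → Matrix (Fin d) (Fin d) ℝ)
    (hQ : ∀ n i, (Q n i).PosSemidef)
    (hR : ∀ n i, (R n i).PosDef)
    (hP : ∀ i, (P i).PosDef)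
    (hm₁ : ∀ n i j, i ≠ j → 0 ≤ m n i j)
    (hm₂ : ∀ n i, ∑ j, m n i j = 0)
    (A' C' Q' : Fin N → Matrix (Fin d) (Fin d) ℝ)
    (B' : Fin N → Matrix (Fin d) (Fin l) ℝ)
    (R' : Fin N → Matrix (Fin l) (Fin l) ℝ)
    (m' : Fin N → Fin N → ℝ)
    (hQ' : ∀ i, (Q' i).PosSemidef)
    (hR' : ∀ i, (R' i).PosDef)
    (hm₁' : ∀ i j, i ≠ j → 0 ≤ m' i j)
    (hm₂' : ∀ i, ∑ j, m' i j = 0)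
    (hAconv : ∀ i, Tendsto (fun n => A n i) atTop (𝓝 (A' i)))
    (hBconv : ∀ i, Tendsto (fun n => B n i) atTop (𝓝 (B' i)))
    (hCconv : ∀ i, Tendsto (fun n => C n i) atTop (𝓝 (C' i)))
    (hQconv : ∀ i, Tendsto (fun n => Q n i) atTop (𝓝 (Q' i)))
    (hRconv : ∀ i, Tendsto (fun n => R n i) atTop (𝓝 (R' i)))
    (hmconv : ∀ i j, Tendsto (fun n => m n i j) atTop (𝓝 (m' i j)))
    (K : ℕ → ℝ → Fin N → Matrix (Fin d) (Fin d) ℝ)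
    (hK : ∀ n, IsRiccatiSolution T (A n) (C n) (B n) (Q n) (R n) (m n) P (K n))
    (φ : ℕ → ℕ) (hφ : StrictMono φ)
    (Khat : ℝ → Fin N → Matrix (Fin d) (Fin d) ℝ)
    (hconv : ∀ i, TendstoUniformlyOn (fun k t => K (φ k) t i)
      (fun t => Khat t i) atTop (Icc (0:ℝ) T)) :
    IsRiccatiSolution T A' C' B' Q' R' m' P Khat := by
  have hψ : Tendsto φ atTop atTop := hφ.tendsto_atTop
  have hKcont : ∀ n i, ContinuousOn (fun t => K n t i) (Icc (0:ℝ) T) :=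
    fun n i t ht => ((hK n).2.1 t ht i).continuousWithinAt
  have hHatCont : ∀ i, ContinuousOn (fun t => Khat t i) (Icc (0:ℝ) T) :=
    fun i => (hconv i).continuousOn (Eventually.of_forall fun k => hKcont (φ k) i).frequently
  have hptK : ∀ t ∈ Icc (0:ℝ) T, ∀ j,
      Tendsto (fun k => K (φ k) t j) atTop (𝓝 (Khat t j)) :=
    fun t ht j => (hconv j).tendsto_at ht
  have hA2 : ∀ i, Tendsto (fun k => A (φ k) i) atTop (𝓝 (A' i)) :=
    fun i => (hAconv i).comp hψ
  have hB2 : ∀ i, Tendsto (fun k => B (φ k) i) atTop (𝓝 (B' i)) :=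
    fun i => (hBconv i).comp hψ
  have hC2 : ∀ i, Tendsto (fun k => C (φ k) i) atTop (𝓝 (C' i)) :=
    fun i => (hCconv i).comp hψ
  have hQ2 : ∀ i, Tendsto (fun k => Q (φ k) i) atTop (𝓝 (Q' i)) :=
    fun i => (hQconv i).comp hψ
  have hR2 : ∀ i, Tendsto (fun k => R (φ k) i) atTop (𝓝 (R' i)) :=
    fun i => (hRconv i).comp hψ
  have hm2 : ∀ i j, Tendsto (fun k => m (φ k) i j) atTop (𝓝 (m' i j)) :=
    fun i j => (hmconv i j).comp hψ
  have hRinv2 : ∀ i, Tendsto (fun k => (R (φ k) i)⁻¹) atTop (𝓝 ((R' i)⁻¹)) :=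
    fun i => tendsto_matrix_inv' (hR2 i) (hR' i).det_pos.ne'
  -- continuity of the Riccati integrands
  have hgcont : ∀ n i, ContinuousOn
      (fun s => riccatiRHS (A n) (C n) (B n) (Q n) (R n) (m n) (K n s) i) (Icc (0:ℝ) T) := by
    intro n i t ht
    exact tendsto_riccatiRHS i tendsto_const_nhds tendsto_const_nhds tendsto_const_nhds
      tendsto_const_nhds tendsto_const_nhds (fun j => tendsto_const_nhds)
      (fun j => hKcont n j t ht)
  have hghatcont : ∀ i, ContinuousOn
      (fun s => riccatiRHS A' C' B' Q' R' m' (Khat s) i) (Icc (0:ℝ) T) := by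
    intro i t ht
    exact tendsto_riccatiRHS i tendsto_const_nhds tendsto_const_nhds tendsto_const_nhds
      tendsto_const_nhds tendsto_const_nhds (fun j => tendsto_const_nhds)
      (fun j => hHatCont j t ht)
  -- integral identity for each approximating solution
  have hii : ∀ n i, ∀ t ∈ Icc (0:ℝ) T, K n t i
      = P i + ∫ s in t..T, riccatiRHS (A n) (C n) (B n) (Q n) (R n) (m n) (K n s) i := by
    intro n i t ht
    have h1 : t ≤ T := ht.2
    have hsub : Icc t T ⊆ Icc (0:ℝ) T := Icc_subset_Icc ht.1 le_rfl
    have hgint : @IntervalIntegrable (Matrix (Fin d) (Fin d) ℝ) PseudoMetricSpace.toUniformSpace.toTopologicalSpace _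
        (fun s => riccatiRHS (A n) (C n) (B n) (Q n) (R n) (m n) (K n s) i) volume t T := by
      apply ContinuousOn.intervalIntegrable
      rw [uIcc_of_le h1]
      exact (hgcont n i).mono hsub
    have heq := intervalIntegral.integral_eq_sub_of_hasDeriv_right_of_le h1
      ((hKcont n i).mono hsub)
      (fun x hx => by
        have hx' : x ∈ Icc (0:ℝ) T := ⟨ht.1.trans hx.1.le, hx.2.le⟩
        have hmem : Icc (0:ℝ) T ∈ 𝓝 x :=
          Icc_mem_nhds (lt_of_le_of_lt ht.1 hx.1) hx.2
        exact (((hK n).2.1 x hx' i).hasDerivAt hmem).hasDerivWithinAt)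
      hgint.neg
    simp only [Pi.neg_apply] at heq
    rw [intervalIntegral.integral_neg, (hK n).2.2 i] at heq
    have h2 := neg_eq_iff_eq_neg.mp heq
    rw [neg_sub] at h2
    rw [h2]
    abel
  -- the limit identity
  have hHatId : ∀ i, ∀ t ∈ Icc (0:ℝ) T, Khat t i
      = P i + ∫ s in t..T, riccatiRHS A' C' B' Q' R' m' (Khat s) i := by
    intro i t ht
    have h1 : t ≤ T := ht.2
    have hsub' : Ioc t T ⊆ Icc (0:ℝ) T := fun s hs => ⟨ht.1.trans hs.1.le, hs.2⟩
    -- constants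
    have hbKhat := fun j => isCompact_Icc.exists_bound_of_continuousOn (hHatCont j)
    choose Cf hCf using hbKhat
    obtain ⟨MK, hMKle⟩ := Finite.exists_le Cf
    obtain ⟨Mm, hMmle⟩ := Finite.exists_le (fun j => |m' i j| + 1)
    set cK : ℝ := MK + 1 with hcKdef
    set cm : ℝ := max Mm 0 with hcmdef
    set cA : ℝ := ‖A' i‖ + 1 with hcAdef
    set cB : ℝ := ‖B' i‖ + 1 with hcBdef
    set cC : ℝ := ‖C' i‖ + 1 with hcCdef
    set cQ : ℝ := ‖Q' i‖ + 1 with hcQdef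
    set cR : ℝ := ‖(R' i)⁻¹‖ + 1 with hcRdef
    have hMK0 : (0:ℝ) ≤ MK :=
      (norm_nonneg (Khat 0 i)).trans ((hCf i 0 ⟨le_rfl, hT.le⟩).trans (hMKle i))
    have hcK0 : (0:ℝ) ≤ cK := by rw [hcKdef]; linarith
    have hcm0 : (0:ℝ) ≤ cm := le_max_right _ _
    have hcA0 : (0:ℝ) ≤ cA := by rw [hcAdef]; positivity
    have hcB0 : (0:ℝ) ≤ cB := by rw [hcBdef]; positivity
    have hcC0 : (0:ℝ) ≤ cC := by rw [hcCdef]; positivity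
    have hcQ0 : (0:ℝ) ≤ cQ := by rw [hcQdef]; positivity
    have hcR0 : (0:ℝ) ≤ cR := by rw [hcRdef]; positivity
    set BND : ℝ := d*(d*cC*cK)*cC + d*cA*cK + d*cK*cA
      + d*(l*(l*(d*cK*cB)*cR)*cB)*cK + cQ + N*(cm*cK) with hBNDdef
    -- eventual bounds
    have evA : ∀ᶠ k in atTop, ‖A (φ k) i‖ ≤ cA :=
      ((hA2 i).norm).eventually_le_const (lt_add_one _)
    have evB : ∀ᶠ k in atTop, ‖B (φ k) i‖ ≤ cB :=
      ((hB2 i).norm).eventually_le_const (lt_add_one _)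
    have evC : ∀ᶠ k in atTop, ‖C (φ k) i‖ ≤ cC :=
      ((hC2 i).norm).eventually_le_const (lt_add_one _)
    have evQ : ∀ᶠ k in atTop, ‖Q (φ k) i‖ ≤ cQ :=
      ((hQ2 i).norm).eventually_le_const (lt_add_one _)
    have evR : ∀ᶠ k in atTop, ‖(R (φ k) i)⁻¹‖ ≤ cR :=
      ((hRinv2 i).norm).eventually_le_const (lt_add_one _)
    have evm : ∀ᶠ k in atTop, ∀ j, |m (φ k) i j| ≤ cm := by
      rw [eventually_all]
      intro j
      have h := ((hm2 i j).abs).eventually_le_const (lt_add_one _)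
      exact h.mono fun k hk => hk.trans ((hMmle j).trans (le_max_left _ _))
    have evK : ∀ᶠ k in atTop, ∀ s ∈ Icc (0:ℝ) T, ∀ j, ‖K (φ k) s j‖ ≤ cK := by
      have h : ∀ j, ∀ᶠ k in atTop, ∀ x ∈ Icc (0:ℝ) T,
          dist (Khat x j) (K (φ k) x j) < 1 :=
        fun j => Metric.tendstoUniformlyOn_iff.mp (hconv j) 1 one_pos
      refine (eventually_all.mpr h).mono fun k hk s hs j => ?_
      have heq : K (φ k) s j = Khat s j - (Khat s j - K (φ k) s j) := by abel
      calc ‖K (φ k) s j‖ = ‖Khat s j - (Khat s j - K (φ k) s j)‖ := by rw [← heq]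
        _ ≤ ‖Khat s j‖ + ‖Khat s j - K (φ k) s j‖ := norm_sub_le _ _
        _ ≤ MK + 1 := add_le_add ((hCf j s hs).trans (hMKle j))
              (by rw [← dist_eq_norm]; exact (hk j s hs).le)
    -- dominated convergence
    have hF_meas : ∀ᶠ k in atTop, AEStronglyMeasurable
        (fun s => riccatiRHS (A (φ k)) (C (φ k)) (B (φ k)) (Q (φ k)) (R (φ k)) (m (φ k))
          (K (φ k) s) i) ((volume : MeasureTheory.Measure ℝ).restrict (Ι t T)) := by
      refine Eventually.of_forall fun k => ?_
      rw [uIoc_of_le h1]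
      exact (show @ContinuousOn ℝ (Matrix (Fin d) (Fin d) ℝ) _ PseudoMetricSpace.toUniformSpace.toTopologicalSpace _ _ from (hgcont (φ k) i).mono hsub').aestronglyMeasurable measurableSet_Ioc
    have h_bound : ∀ᶠ k in atTop, ∀ᵐ s ∂(volume : MeasureTheory.Measure ℝ), s ∈ Ι t T →
        ‖riccatiRHS (A (φ k)) (C (φ k)) (B (φ k)) (Q (φ k)) (R (φ k)) (m (φ k))
          (K (φ k) s) i‖ ≤ BND := by
      filter_upwards [evA, evB, evC, evQ, evR, evm, evK] with k hkA hkB hkC hkQ hkR hkm hkK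
      refine MeasureTheory.ae_of_all _ fun s hs => ?_
      have hsS : s ∈ Icc (0:ℝ) T := hsub' (by rwa [uIoc_of_le h1] at hs)
      have hK0 : ∀ j, ‖K (φ k) s j‖ ≤ cK := hkK s hsS
      have t1 : ‖(C (φ k) i)ᵀ * K (φ k) s i * C (φ k) i‖ ≤ d*(d*cC*cK)*cC := by
        calc ‖(C (φ k) i)ᵀ * K (φ k) s i * C (φ k) i‖
            ≤ d * ‖(C (φ k) i)ᵀ * K (φ k) s i‖ * ‖C (φ k) i‖ := matrix_norm_mul_le' _ _
          _ ≤ d * (d * ‖(C (φ k) i)ᵀ‖ * ‖K (φ k) s i‖) * ‖C (φ k) i‖ := by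
              gcongr
              exact matrix_norm_mul_le' _ _
          _ ≤ d*(d*cC*cK)*cC := by
              rw [Matrix.norm_transpose]
              gcongr <;> first | assumption | exact hkC | exact hK0 i
      have t2 : ‖(A (φ k) i)ᵀ * K (φ k) s i‖ ≤ d*cA*cK := by
        calc ‖(A (φ k) i)ᵀ * K (φ k) s i‖
            ≤ d * ‖(A (φ k) i)ᵀ‖ * ‖K (φ k) s i‖ := matrix_norm_mul_le' _ _
          _ ≤ d*cA*cK := by
              rw [Matrix.norm_transpose]
              gcongr <;> first | assumption | exact hkA | exact hK0 i
      have t3 : ‖K (φ k) s i * A (φ k) i‖ ≤ d*cK*cA := by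
        calc ‖K (φ k) s i * A (φ k) i‖
            ≤ d * ‖K (φ k) s i‖ * ‖A (φ k) i‖ := matrix_norm_mul_le' _ _
          _ ≤ d*cK*cA := by gcongr <;> first | assumption | exact hkA | exact hK0 i
      have t4 : ‖K (φ k) s i * B (φ k) i * (R (φ k) i)⁻¹ * (B (φ k) i)ᵀ * K (φ k) s i‖
          ≤ d*(l*(l*(d*cK*cB)*cR)*cB)*cK := by
        have s1 : ‖K (φ k) s i * B (φ k) i‖ ≤ d*cK*cB :=
          (matrix_norm_mul_le' _ _).trans
            (by gcongr <;> first | assumption | exact hkB | exact hK0 i)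
        have s2 : ‖K (φ k) s i * B (φ k) i * (R (φ k) i)⁻¹‖ ≤ l*(d*cK*cB)*cR :=
          (matrix_norm_mul_le' _ _).trans
            (by gcongr <;> first | assumption | exact hkR | positivity)
        have s3 : ‖K (φ k) s i * B (φ k) i * (R (φ k) i)⁻¹ * (B (φ k) i)ᵀ‖
            ≤ l*(l*(d*cK*cB)*cR)*cB := by
          refine (matrix_norm_mul_le' _ _).trans ?_
          rw [Matrix.norm_transpose]
          gcongr <;> first | assumption | exact hkB | positivity
        refine (matrix_norm_mul_le' _ _).trans ?_
        gcongr <;> first | assumption | exact hK0 i | positivity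
      have t6 : ‖∑ j, m (φ k) i j • K (φ k) s j‖ ≤ N*(cm*cK) := by
        calc ‖∑ j, m (φ k) i j • K (φ k) s j‖
            ≤ ∑ j, ‖m (φ k) i j • K (φ k) s j‖ := norm_sum_le _ _
          _ ≤ ∑ _j : Fin N, cm*cK := Finset.sum_le_sum fun j _ => by
              rw [norm_smul, Real.norm_eq_abs]
              exact mul_le_mul (hkm j) (hK0 j) (norm_nonneg _) hcm0
          _ = N*(cm*cK) := by simp [mul_comm]
      have step : ∀ (a b c e f g : Matrix (Fin d) (Fin d) ℝ),
          ‖a+b+c-e+f+g‖ ≤ ‖a‖+‖b‖+‖c‖+‖e‖+‖f‖+‖g‖ := by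
        intro a b c e f g
        calc ‖a+b+c-e+f+g‖ ≤ ‖a+b+c-e+f‖+‖g‖ := norm_add_le _ _
          _ ≤ (‖a+b+c-e‖+‖f‖)+‖g‖ := by gcongr; exact norm_add_le _ _
          _ ≤ ((‖a+b+c‖+‖e‖)+‖f‖)+‖g‖ := by gcongr; exact norm_sub_le _ _
          _ ≤ (((‖a+b‖+‖c‖)+‖e‖)+‖f‖)+‖g‖ := by gcongr; exact norm_add_le _ _
          _ ≤ ‖a‖+‖b‖+‖c‖+‖e‖+‖f‖+‖g‖ := by gcongr; exact norm_add_le _ _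
      refine (step _ _ _ _ _ _).trans ?_
      rw [hBNDdef]
      exact add_le_add (add_le_add (add_le_add (add_le_add (add_le_add t1 t2) t3) t4) hkQ) t6
    have h_lim : ∀ᵐ s ∂(volume : MeasureTheory.Measure ℝ), s ∈ Ι t T →
        Tendsto (fun k => riccatiRHS (A (φ k)) (C (φ k)) (B (φ k)) (Q (φ k)) (R (φ k))
          (m (φ k)) (K (φ k) s) i) atTop
          (𝓝 (riccatiRHS A' C' B' Q' R' m' (Khat s) i)) := by
      refine MeasureTheory.ae_of_all _ fun s hs => ?_
      have hsS : s ∈ Icc (0:ℝ) T := hsub' (by rwa [uIoc_of_le h1] at hs)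
      exact tendsto_riccatiRHS i (hA2 i) (hB2 i) (hC2 i) (hQ2 i) (hRinv2 i)
        (fun j => hm2 i j) (fun j => hptK s hsS j)
    have hTend := intervalIntegral.tendsto_integral_filter_of_dominated_convergence
      (fun _ => BND) hF_meas h_bound intervalIntegrable_const h_lim
    have hTot : Tendsto (fun k => K (φ k) t i) atTop
        (𝓝 (P i + ∫ s in t..T, riccatiRHS A' C' B' Q' R' m' (Khat s) i)) := by
      have heq : (fun k => K (φ k) t i) = fun k => P i + ∫ s in t..T,
          riccatiRHS (A (φ k)) (C (φ k)) (B (φ k)) (Q (φ k)) (R (φ k)) (m (φ k))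
            (K (φ k) s) i := funext fun k => hii (φ k) i t ht
      rw [heq]
      exact tendsto_const_nhds.add hTend
    exact tendsto_nhds_unique (hptK t ht i) hTot
  -- assemble the solution property
  refine ⟨?_, ?_, ?_⟩
  · intro t ht i
    have h1 := hptK t ht i
    have h2 : Tendsto (fun k => (K (φ k) t i)ᵀ) atTop (𝓝 ((Khat t i)ᵀ)) :=
      tendsto_matrix_transpose' h1
    have h3 : (fun k => (K (φ k) t i)ᵀ) = fun k => K (φ k) t i :=
      funext fun k => (hK (φ k)).1 t ht i
    exact tendsto_nhds_unique (h3 ▸ h2) h1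
  · intro t ht i
    have hgc : ContinuousOn (fun s => riccatiRHS A' C' B' Q' R' m' (Khat s) i)
      (Icc (0:ℝ) T) := hghatcont i
    have hint2 : @IntervalIntegrable (Matrix (Fin d) (Fin d) ℝ) PseudoMetricSpace.toUniformSpace.toTopologicalSpace _ (fun s => riccatiRHS A' C' B' Q' R' m' (Khat s) i)
        volume 0 T := by
      apply ContinuousOn.intervalIntegrable
      rwa [uIcc_of_le hT.le]
    have hintu : ∀ u ∈ Icc (0:ℝ) T, @IntervalIntegrable (Matrix (Fin d) (Fin d) ℝ) PseudoMetricSpace.toUniformSpace.toTopologicalSpace _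
        (fun s => riccatiRHS A' C' B' Q' R' m' (Khat s) i) volume 0 u := by
      intro u hu
      apply ContinuousOn.intervalIntegrable
      rw [uIcc_of_le hu.1]
      exact hgc.mono (Icc_subset_Icc le_rfl hu.2)
    haveI : Fact (t ∈ Icc (0:ℝ) T) := ⟨ht⟩
    have hmeas : @StronglyMeasurableAtFilter ℝ (Matrix (Fin d) (Fin d) ℝ) _
        PseudoMetricSpace.toUniformSpace.toTopologicalSpace
        (fun s => riccatiRHS A' C' B' Q' R' m' (Khat s) i) (𝓝[Icc (0:ℝ) T] t) volume :=
      ⟨Icc (0:ℝ) T, self_mem_nhdsWithin,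
        (show @ContinuousOn ℝ (Matrix (Fin d) (Fin d) ℝ) _ PseudoMetricSpace.toUniformSpace.toTopologicalSpace _ _ from hgc).aestronglyMeasurable measurableSet_Icc⟩
    have hG : HasDerivWithinAt
        (fun u => ∫ s in (0:ℝ)..u, riccatiRHS A' C' B' Q' R' m' (Khat s) i)
        (riccatiRHS A' C' B' Q' R' m' (Khat t) i) (Icc (0:ℝ) T) t :=
      intervalIntegral.integral_hasDerivWithinAt_right (hintu t ht) hmeas (hgc t ht)
    have hder : HasDerivWithinAt
        (fun u => (P i + ∫ s in (0:ℝ)..T, riccatiRHS A' C' B' Q' R' m' (Khat s) i)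
          - ∫ s in (0:ℝ)..u, riccatiRHS A' C' B' Q' R' m' (Khat s) i)
        (-(riccatiRHS A' C' B' Q' R' m' (Khat t) i)) (Icc (0:ℝ) T) t := by
      have hsub := (hasDerivWithinAt_const t (Icc (0:ℝ) T)
        (P i + ∫ s in (0:ℝ)..T, riccatiRHS A' C' B' Q' R' m' (Khat s) i)).sub hG
      simp only [zero_sub] at hsub
      exact hsub
    refine hder.congr (fun u hu => ?_) ?_
    · rw [hHatId i u hu, ← intervalIntegral.integral_interval_sub_left hint2 (hintu u hu)]
      abel
    · rw [hHatId i t ht, ← intervalIntegral.integral_interval_sub_left hint2 (hintu t ht)]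
      abel
  · intro i
    have h := hHatId i T ⟨hT.le, le_rfl⟩
    simpa [intervalIntegral.integral_same] using h
end
end

section
/- Continuity of the Riccati solutions under coefficient convergence: let (A_n, B_n, C_n, Q_n, R_n, m^n), n ∈ ℕ, be coefficient data all having the same terminal matrices P(i), and suppose that for every i, j ∈ S one has A_n(i) → A(i), B_n(i) → B(i), C_n(i) → C(i), Q_n(i) → Q(i), R_n(i) → R(i), and m^n_{ij} → m_{ij} as n → ∞, where (A, B, C, Q, R, m, P) is itself a coefficient datum (in particular each R(i) is positive definite). Let K_n solve the coupled Riccati system associated with the n-th datum and let K be the unique solution of the coupled Riccati system associated with (A, B, C, Q, R, m, P). Then K_n converges to K uniformly on [0,T]: for every i ∈ S, sup_{t∈[0,T]} ‖K_n(t,i) − K(t,i)‖ → 0 as n → ∞. -/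
open Matrix Set Filter Topology

attribute [local instance] Matrix.normedAddCommGroup Matrix.normedSpace

noncomputable section

private def rhs' {d N : ℕ} (A C S Q : Fin N → Matrix (Fin d) (Fin d) ℝ)
    (m : Fin N → Fin N → ℝ) (X : Fin N → Matrix (Fin d) (Fin d) ℝ) (i : Fin N) :
    Matrix (Fin d) (Fin d) ℝ :=
  (C i)ᵀ * X i * (C i) + (A i)ᵀ * X i + X i * A i - X i * S i * X i + Q i
    + ∑ j, m i j • X j

private lemma riccatiRHS_eq_rhs' {d l N : ℕ}
    (A C : Fin N → Matrix (Fin d) (Fin d) ℝ) (B : Fin N → Matrix (Fin d) (Fin l) ℝ)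
    (Q : Fin N → Matrix (Fin d) (Fin d) ℝ) (R : Fin N → Matrix (Fin l) (Fin l) ℝ)
    (m : Fin N → Fin N → ℝ) (K : Fin N → Matrix (Fin d) (Fin d) ℝ) (i : Fin N) :
    riccatiRHS A C B Q R m K i
      = rhs' A C (fun i => B i * (R i)⁻¹ * (B i)ᵀ) Q m K i := by
  simp only [riccatiRHS, rhs', Matrix.mul_assoc]

private lemma mat_mul_norm_le {p q r : ℕ} (A : Matrix (Fin p) (Fin q) ℝ)
    (B : Matrix (Fin q) (Fin r) ℝ) :
    ‖A * B‖ ≤ (q : ℝ) * ‖A‖ * ‖B‖ := by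
  rw [Matrix.norm_le_iff (by positivity)]
  intro i j
  rw [Matrix.mul_apply]
  calc ‖∑ k, A i k * B k j‖ ≤ ∑ k, ‖A i k * B k j‖ := norm_sum_le _ _
    _ ≤ ∑ _k : Fin q, ‖A‖ * ‖B‖ := Finset.sum_le_sum fun k _ => by
        rw [norm_mul]
        exact mul_le_mul (Matrix.norm_entry_le_entrywise_sup_norm A)
          (Matrix.norm_entry_le_entrywise_sup_norm B) (norm_nonneg _) (norm_nonneg _)
    _ = (q : ℝ) * ‖A‖ * ‖B‖ := by
        simp [Finset.sum_const, Finset.card_univ, mul_assoc]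

private lemma mul2_le {q : ℕ} {p r : ℕ} {P : Matrix (Fin p) (Fin q) ℝ}
    {Z : Matrix (Fin q) (Fin r) ℝ} {a z : ℝ}
    (hP : ‖P‖ ≤ a) (hZ : ‖Z‖ ≤ z) (ha : 0 ≤ a) (hz : 0 ≤ z) :
    ‖P * Z‖ ≤ (q : ℝ) * a * z := by
  have h := mat_mul_norm_le P Z
  have hq : (0:ℝ) ≤ (q:ℝ) := Nat.cast_nonneg q
  have h2 : ‖P‖ * ‖Z‖ ≤ a * z := mul_le_mul hP hZ (norm_nonneg Z) ha
  calc ‖P * Z‖ ≤ (q:ℝ) * ‖P‖ * ‖Z‖ := h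
    _ = (q:ℝ) * (‖P‖ * ‖Z‖) := by ring
    _ ≤ (q:ℝ) * (a * z) := mul_le_mul_of_nonneg_left h2 hq
    _ = (q:ℝ) * a * z := by ring

private lemma mul3_le {q : ℕ} {P Z W : Matrix (Fin q) (Fin q) ℝ} {a z b : ℝ}
    (hP : ‖P‖ ≤ a) (hZ : ‖Z‖ ≤ z) (hW : ‖W‖ ≤ b)
    (ha : 0 ≤ a) (hz : 0 ≤ z) (hb : 0 ≤ b) :
    ‖P * Z * W‖ ≤ (q : ℝ)^2 * a * z * b := by
  have h1 : ‖P * Z‖ ≤ (q:ℝ) * a * z := mul2_le hP hZ ha hz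
  have h2 : ‖P * Z * W‖ ≤ (q:ℝ) * ((q:ℝ) * a * z) * b :=
    mul2_le h1 hW (by positivity) hb
  calc ‖P * Z * W‖ ≤ (q:ℝ) * ((q:ℝ) * a * z) * b := h2
    _ = (q:ℝ)^2 * a * z * b := by ring

private lemma rhs'_lipschitz {d N : ℕ} {c r : ℝ} (hc : 0 ≤ c) (hr : 0 ≤ r)
    {A C S Q : Fin N → Matrix (Fin d) (Fin d) ℝ} {m : Fin N → Fin N → ℝ}
    {X Y : Fin N → Matrix (Fin d) (Fin d) ℝ}
    (hA : ∀ i, ‖A i‖ ≤ c) (hC : ∀ i, ‖C i‖ ≤ c) (hS : ∀ i, ‖S i‖ ≤ c)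
    (hm : ∀ i j, |m i j| ≤ c)
    (hX : ‖X‖ ≤ r) (hY : ‖Y‖ ≤ r) :
    ‖(fun i => rhs' A C S Q m X i) - (fun i => rhs' A C S Q m Y i)‖
      ≤ ((d:ℝ)^2*c^2 + 2*d*c + 2*(d:ℝ)^2*c*r + N*c) * ‖X - Y‖ := by
  set D := X - Y with hD
  have hDnn : (0:ℝ) ≤ ‖D‖ := norm_nonneg D
  have hDi : ∀ i, ‖D i‖ ≤ ‖D‖ := fun i => norm_le_pi_norm D i
  have hLnn : (0:ℝ) ≤ ((d:ℝ)^2*c^2 + 2*d*c + 2*(d:ℝ)^2*c*r + N*c) * ‖D‖ := by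
    have h0 : (0:ℝ) ≤ (d:ℝ) := Nat.cast_nonneg d
    have h1 : (0:ℝ) ≤ (N:ℝ) := Nat.cast_nonneg N
    have := mul_nonneg (mul_nonneg (mul_nonneg (by positivity : (0:ℝ) ≤ 2*(d:ℝ)^2) hc) hr) hDnn
    nlinarith [mul_nonneg (mul_nonneg h0 hc) hDnn, mul_nonneg (mul_nonneg h1 hc) hDnn,
      mul_nonneg (mul_nonneg (by positivity : (0:ℝ) ≤ (d:ℝ)^2) (mul_nonneg hc hc)) hDnn]
  rw [pi_norm_le_iff_of_nonneg hLnn]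
  intro i
  simp only [Pi.sub_apply]
  have key : rhs' A C S Q m X i - rhs' A C S Q m Y i
      = (C i)ᵀ * D i * C i + ((A i)ᵀ * D i + (D i * A i +
        (-(D i * S i * X i) + (-(Y i * S i * D i) + ∑ j, m i j • D j)))) := by
    simp only [rhs', hD, Pi.sub_apply, Matrix.mul_sub, Matrix.sub_mul, smul_sub,
      Finset.sum_sub_distrib]
    abel
  rw [key]
  have t1 : ‖(C i)ᵀ * D i * C i‖ ≤ (d:ℝ)^2 * c * ‖D‖ * c := by
    refine mul3_le ?_ (hDi i) (hC i) hc hDnn hc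
    rw [Matrix.norm_transpose]; exact hC i
  have t2 : ‖(A i)ᵀ * D i‖ ≤ (d:ℝ) * c * ‖D‖ := by
    refine mul2_le ?_ (hDi i) hc hDnn
    rw [Matrix.norm_transpose]; exact hA i
  have t3 : ‖D i * A i‖ ≤ (d:ℝ) * ‖D‖ * c := mul2_le (hDi i) (hA i) hDnn hc
  have t4 : ‖D i * S i * X i‖ ≤ (d:ℝ)^2 * ‖D‖ * c * r :=
    mul3_le (hDi i) (hS i) ((norm_le_pi_norm X i).trans hX) hDnn hc hr
  have t5 : ‖Y i * S i * D i‖ ≤ (d:ℝ)^2 * r * c * ‖D‖ :=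
    mul3_le ((norm_le_pi_norm Y i).trans hY) (hS i) (hDi i) hr hc hDnn
  have t6 : ‖∑ j, m i j • D j‖ ≤ (N:ℝ) * (c * ‖D‖) := by
    calc ‖∑ j, m i j • D j‖ ≤ ∑ j, ‖m i j • D j‖ := norm_sum_le _ _
      _ ≤ ∑ _j : Fin N, c * ‖D‖ := Finset.sum_le_sum fun j _ => by
          rw [norm_smul, Real.norm_eq_abs]
          exact mul_le_mul (hm i j) (hDi j) (norm_nonneg _) hc
      _ = (N:ℝ) * (c * ‖D‖) := by simp [Finset.sum_const, Finset.card_univ]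
  have hfin : ‖(C i)ᵀ * D i * C i + ((A i)ᵀ * D i + (D i * A i +
        (-(D i * S i * X i) + (-(Y i * S i * D i) + ∑ j, m i j • D j))))‖
      ≤ (d:ℝ)^2 * c * ‖D‖ * c + ((d:ℝ) * c * ‖D‖ + ((d:ℝ) * ‖D‖ * c +
        ((d:ℝ)^2 * ‖D‖ * c * r + ((d:ℝ)^2 * r * c * ‖D‖ + (N:ℝ) * (c * ‖D‖))))) := by
    refine (norm_add_le _ _).trans (add_le_add t1 ?_)
    refine (norm_add_le _ _).trans (add_le_add t2 ?_)
    refine (norm_add_le _ _).trans (add_le_add t3 ?_)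
    refine (norm_add_le _ _).trans (add_le_add (by rwa [norm_neg]) ?_)
    exact (norm_add_le _ _).trans (add_le_add (by rwa [norm_neg]) t6)
  refine hfin.trans (le_of_eq ?_)
  ring

private lemma rhs'_param_diff {d N : ℕ} {c r e : ℝ} (hc : 0 ≤ c) (hr : 0 ≤ r) (he : 0 ≤ e)
    {A A' C C' S S' Q Q' : Fin N → Matrix (Fin d) (Fin d) ℝ} {m m' : Fin N → Fin N → ℝ}
    {Y : Fin N → Matrix (Fin d) (Fin d) ℝ}
    (hC : ∀ i, ‖C i‖ ≤ c) (hC' : ∀ i, ‖C' i‖ ≤ c)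
    (hdA : ∀ i, ‖A i - A' i‖ ≤ e) (hdC : ∀ i, ‖C i - C' i‖ ≤ e)
    (hdS : ∀ i, ‖S i - S' i‖ ≤ e) (hdQ : ∀ i, ‖Q i - Q' i‖ ≤ e)
    (hdm : ∀ i j, |m i j - m' i j| ≤ e)
    (hY : ‖Y‖ ≤ r) :
    ‖(fun i => rhs' A C S Q m Y i) - (fun i => rhs' A' C' S' Q' m' Y i)‖
      ≤ (2*(d:ℝ)^2*c*r + 2*d*r + (d:ℝ)^2*r^2 + 1 + N*r) * e := by
  have hYi : ∀ i, ‖Y i‖ ≤ r := fun i => (norm_le_pi_norm Y i).trans hY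
  have hLnn : (0:ℝ) ≤ (2*(d:ℝ)^2*c*r + 2*d*r + (d:ℝ)^2*r^2 + 1 + N*r) * e := by
    have h0 : (0:ℝ) ≤ (d:ℝ) := Nat.cast_nonneg d
    have h1 : (0:ℝ) ≤ (N:ℝ) := Nat.cast_nonneg N
    have e2 : (0:ℝ) ≤ (d:ℝ)^2 := by positivity
    nlinarith [mul_nonneg (mul_nonneg e2 hc) hr, mul_nonneg h0 hr, mul_nonneg h1 hr,
      mul_nonneg e2 (mul_nonneg hr hr)]
  rw [pi_norm_le_iff_of_nonneg hLnn]
  intro i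
  simp only [Pi.sub_apply]
  have key : rhs' A C S Q m Y i - rhs' A' C' S' Q' m' Y i
      = (C i - C' i)ᵀ * Y i * C i + ((C' i)ᵀ * Y i * (C i - C' i) +
        ((A i - A' i)ᵀ * Y i + (Y i * (A i - A' i) +
        (-(Y i * (S i - S' i) * Y i) + ((Q i - Q' i) +
        ∑ j, (m i j - m' i j) • Y j))))) := by
    simp only [rhs', Matrix.transpose_sub, Matrix.mul_sub, Matrix.sub_mul, sub_smul,
      Finset.sum_sub_distrib]
    abel
  rw [key]
  have u1 : ‖(C i - C' i)ᵀ * Y i * C i‖ ≤ (d:ℝ)^2 * e * r * c := by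
    refine mul3_le ?_ (hYi i) (hC i) he hr hc
    rw [Matrix.norm_transpose]; exact hdC i
  have u2 : ‖(C' i)ᵀ * Y i * (C i - C' i)‖ ≤ (d:ℝ)^2 * c * r * e := by
    refine mul3_le ?_ (hYi i) (hdC i) hc hr he
    rw [Matrix.norm_transpose]; exact hC' i
  have u3 : ‖(A i - A' i)ᵀ * Y i‖ ≤ (d:ℝ) * e * r := by
    refine mul2_le ?_ (hYi i) he hr
    rw [Matrix.norm_transpose]; exact hdA i
  have u4 : ‖Y i * (A i - A' i)‖ ≤ (d:ℝ) * r * e := mul2_le (hYi i) (hdA i) hr he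
  have u5 : ‖Y i * (S i - S' i) * Y i‖ ≤ (d:ℝ)^2 * r * e * r :=
    mul3_le (hYi i) (hdS i) (hYi i) hr he hr
  have u6 : ‖Q i - Q' i‖ ≤ e := hdQ i
  have u7 : ‖∑ j, (m i j - m' i j) • Y j‖ ≤ (N:ℝ) * (e * r) := by
    calc ‖∑ j, (m i j - m' i j) • Y j‖ ≤ ∑ j, ‖(m i j - m' i j) • Y j‖ := norm_sum_le _ _
      _ ≤ ∑ _j : Fin N, e * r := Finset.sum_le_sum fun j _ => by
          rw [norm_smul, Real.norm_eq_abs]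
          exact mul_le_mul (hdm i j) (hYi j) (norm_nonneg _) he
      _ = (N:ℝ) * (e * r) := by simp [Finset.sum_const, Finset.card_univ]
  have hfin : ‖(C i - C' i)ᵀ * Y i * C i + ((C' i)ᵀ * Y i * (C i - C' i) +
        ((A i - A' i)ᵀ * Y i + (Y i * (A i - A' i) +
        (-(Y i * (S i - S' i) * Y i) + ((Q i - Q' i) +
        ∑ j, (m i j - m' i j) • Y j)))))‖
      ≤ (d:ℝ)^2 * e * r * c + ((d:ℝ)^2 * c * r * e + ((d:ℝ) * e * r + ((d:ℝ) * r * e +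
        ((d:ℝ)^2 * r * e * r + (e + (N:ℝ) * (e * r)))))) := by
    refine (norm_add_le _ _).trans (add_le_add u1 ?_)
    refine (norm_add_le _ _).trans (add_le_add u2 ?_)
    refine (norm_add_le _ _).trans (add_le_add u3 ?_)
    refine (norm_add_le _ _).trans (add_le_add u4 ?_)
    refine (norm_add_le _ _).trans (add_le_add (by rwa [norm_neg]) ?_)
    exact (norm_add_le _ _).trans (add_le_add u6 u7)
  refine hfin.trans (le_of_eq ?_)
  ring

private lemma gb_mono {L ε : ℝ} (hL : 0 < L) (hε : 0 ≤ ε) {x y : ℝ} (h : x ≤ y) :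
    gronwallBound 0 L ε x ≤ gronwallBound 0 L ε y := by
  rw [gronwallBound_of_K_ne_0 hL.ne']
  simp only [zero_mul, zero_add]
  have h1 : Real.exp (L * x) ≤ Real.exp (L * y) :=
    Real.exp_le_exp.2 (mul_le_mul_of_nonneg_left h hL.le)
  have h2 : 0 ≤ ε / L := div_nonneg hε hL.le
  nlinarith

private lemma bound_of_tendsto {γ : Type*} [SeminormedAddCommGroup γ]
    {u : ℕ → γ} {a : γ} (h : Tendsto u atTop (𝓝 a)) :
    ∃ c, 0 ≤ c ∧ (∀ n, ‖u n‖ ≤ c) ∧ ‖a‖ ≤ c := by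
  obtain ⟨c, hc⟩ := h.norm.bddAbove_range
  refine ⟨max c 0, le_max_right _ _, fun n => le_trans (hc ⟨n, rfl⟩) (le_max_left _ _), ?_⟩
  exact le_trans (le_of_tendsto h.norm (Eventually.of_forall fun n => hc ⟨n, rfl⟩))
    (le_max_left _ _)

set_option maxHeartbeats 2000000 in
/-- Continuity of the Riccati solutions under coefficient convergence:
`Kₙ → K` uniformly on `[0,T]`. -/
theorem riccati_continuity
    (d l N : ℕ) (hd : 0 < d) (hl : 0 < l) (hN : 0 < N)
    (T : ℝ) (hT : 0 < T)
    (A C Q : ℕ → Fin N → Matrix (Fin d) (Fin d) ℝ)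
    (B : ℕ → Fin N → Matrix (Fin d) (Fin l) ℝ)
    (R : ℕ → Fin N → Matrix (Fin l) (Fin l) ℝ)
    (m : ℕ → Fin N → Fin N → ℝ)
    (P : Fin N → Matrix (Fin d) (Fin d) ℝ)
    (hQ : ∀ n i, (Q n i).PosSemidef)
    (hR : ∀ n i, (R n i).PosDef)
    (hP : ∀ i, (P i).PosDef)
    (hm₁ : ∀ n i j, i ≠ j → 0 ≤ m n i j)
    (hm₂ : ∀ n i, ∑ j, m n i j = 0)
    (A' C' Q' : Fin N → Matrix (Fin d) (Fin d) ℝ)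
    (B' : Fin N → Matrix (Fin d) (Fin l) ℝ)
    (R' : Fin N → Matrix (Fin l) (Fin l) ℝ)
    (m' : Fin N → Fin N → ℝ)
    (hQ' : ∀ i, (Q' i).PosSemidef)
    (hR' : ∀ i, (R' i).PosDef)
    (hm₁' : ∀ i j, i ≠ j → 0 ≤ m' i j)
    (hm₂' : ∀ i, ∑ j, m' i j = 0)
    (hAconv : ∀ i, Tendsto (fun n => A n i) atTop (𝓝 (A' i)))
    (hBconv : ∀ i, Tendsto (fun n => B n i) atTop (𝓝 (B' i)))
    (hCconv : ∀ i, Tendsto (fun n => C n i) atTop (𝓝 (C' i)))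
    (hQconv : ∀ i, Tendsto (fun n => Q n i) atTop (𝓝 (Q' i)))
    (hRconv : ∀ i, Tendsto (fun n => R n i) atTop (𝓝 (R' i)))
    (hmconv : ∀ i j, Tendsto (fun n => m n i j) atTop (𝓝 (m' i j)))
    (K : ℕ → ℝ → Fin N → Matrix (Fin d) (Fin d) ℝ)
    (hK : ∀ n, IsRiccatiSolution T (A n) (C n) (B n) (Q n) (R n) (m n) P (K n))
    (K' : ℝ → Fin N → Matrix (Fin d) (Fin d) ℝ)
    (hK' : IsRiccatiSolution T A' C' B' Q' R' m' P K') :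
    ∀ i, TendstoUniformlyOn (fun n t => K n t i) (fun t => K' t i)
      atTop (Icc (0:ℝ) T) := by
  -- the effective quadratic coefficients
  set S : ℕ → Fin N → Matrix (Fin d) (Fin d) ℝ :=
    fun n i => B n i * (R n i)⁻¹ * (B n i)ᵀ with hSdef
  set S' : Fin N → Matrix (Fin d) (Fin d) ℝ :=
    fun i => B' i * (R' i)⁻¹ * (B' i)ᵀ with hS'def
  have hSconv : ∀ i, Tendsto (fun n => S n i) atTop (𝓝 (S' i)) := by
    intro i
    have hdet : Tendsto (fun n => (R n i).det) atTop (𝓝 ((R' i).det)) :=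
      ((continuous_id.matrix_det).tendsto (R' i)).comp (hRconv i)
    have hadj : Tendsto (fun n => (R n i).adjugate) atTop (𝓝 ((R' i).adjugate)) :=
      ((continuous_id.matrix_adjugate).tendsto (R' i)).comp (hRconv i)
    have hdet0 : (R' i).det ≠ 0 := (hR' i).det_pos.ne'
    have hinv : Tendsto (fun n => (R n i)⁻¹) atTop (𝓝 ((R' i)⁻¹)) := by
      simp only [Matrix.inv_def, Ring.inverse_eq_inv']
      exact (hdet.inv₀ hdet0).smul hadj
    have hmul1 : Tendsto (fun n => B n i * (R n i)⁻¹) atTop (𝓝 (B' i * (R' i)⁻¹)) := by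
      have : Continuous fun p : Matrix (Fin d) (Fin l) ℝ × Matrix (Fin l) (Fin l) ℝ =>
          p.1 * p.2 := continuous_fst.matrix_mul continuous_snd
      exact (this.tendsto _).comp ((hBconv i).prodMk_nhds hinv)
    have htr : Tendsto (fun n => (B n i)ᵀ) atTop (𝓝 (B' i)ᵀ) :=
      ((continuous_id.matrix_transpose).tendsto (B' i)).comp (hBconv i)
    have hmulc : Continuous fun p : Matrix (Fin d) (Fin l) ℝ × Matrix (Fin l) (Fin d) ℝ =>
        p.1 * p.2 := continuous_fst.matrix_mul continuous_snd
    exact (hmulc.tendsto _).comp (hmul1.prodMk_nhds htr)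
  -- pi level convergence
  have hAp : Tendsto (fun n => A n) atTop (𝓝 A') := tendsto_pi_nhds.2 hAconv
  have hCp : Tendsto (fun n => C n) atTop (𝓝 C') := tendsto_pi_nhds.2 hCconv
  have hQp : Tendsto (fun n => Q n) atTop (𝓝 Q') := tendsto_pi_nhds.2 hQconv
  have hSp : Tendsto (fun n => S n) atTop (𝓝 S') := tendsto_pi_nhds.2 hSconv
  have hmp : Tendsto (fun n => m n) atTop (𝓝 m') :=
    tendsto_pi_nhds.2 fun i => tendsto_pi_nhds.2 (hmconv i)
  -- the error sequence
  set e : ℕ → ℝ := fun n =>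
    ‖A n - A'‖ + ‖C n - C'‖ + ‖S n - S'‖ + ‖Q n - Q'‖ + ‖m n - m'‖ with hedef
  have he_nonneg : ∀ n, 0 ≤ e n := fun n => by positivity
  have he0 : Tendsto e atTop (𝓝 0) := by
    have h1 := tendsto_iff_norm_sub_tendsto_zero.1 hAp
    have h2 := tendsto_iff_norm_sub_tendsto_zero.1 hCp
    have h3 := tendsto_iff_norm_sub_tendsto_zero.1 hSp
    have h4 := tendsto_iff_norm_sub_tendsto_zero.1 hQp
    have h5 := tendsto_iff_norm_sub_tendsto_zero.1 hmp
    simpa using ((((h1.add h2).add h3).add h4).add h5)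
  have hdA : ∀ n i, ‖A n i - A' i‖ ≤ e n := fun n i => by
    have h := norm_le_pi_norm (A n - A') i
    simp only [Pi.sub_apply] at h
    refine h.trans ?_
    have := norm_nonneg (C n - C'); have := norm_nonneg (S n - S')
    have := norm_nonneg (Q n - Q'); have := norm_nonneg (m n - m')
    simp only [hedef]; linarith
  have hdC : ∀ n i, ‖C n i - C' i‖ ≤ e n := fun n i => by
    have h := norm_le_pi_norm (C n - C') i
    simp only [Pi.sub_apply] at h
    refine h.trans ?_
    have := norm_nonneg (A n - A'); have := norm_nonneg (S n - S')
    have := norm_nonneg (Q n - Q'); have := norm_nonneg (m n - m')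
    simp only [hedef]; linarith
  have hdS : ∀ n i, ‖S n i - S' i‖ ≤ e n := fun n i => by
    have h := norm_le_pi_norm (S n - S') i
    simp only [Pi.sub_apply] at h
    refine h.trans ?_
    have := norm_nonneg (A n - A'); have := norm_nonneg (C n - C')
    have := norm_nonneg (Q n - Q'); have := norm_nonneg (m n - m')
    simp only [hedef]; linarith
  have hdQ : ∀ n i, ‖Q n i - Q' i‖ ≤ e n := fun n i => by
    have h := norm_le_pi_norm (Q n - Q') i
    simp only [Pi.sub_apply] at h
    refine h.trans ?_
    have := norm_nonneg (A n - A'); have := norm_nonneg (C n - C')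
    have := norm_nonneg (S n - S'); have := norm_nonneg (m n - m')
    simp only [hedef]; linarith
  have hdm : ∀ n i j, |m n i j - m' i j| ≤ e n := fun n i j => by
    have h1 := norm_le_pi_norm (m n - m') i
    have h2 := norm_le_pi_norm ((m n - m') i) j
    simp only [Pi.sub_apply, Real.norm_eq_abs] at h1 h2
    refine (h2.trans h1).trans ?_
    have := norm_nonneg (A n - A'); have := norm_nonneg (C n - C')
    have := norm_nonneg (S n - S'); have := norm_nonneg (Q n - Q')
    simp only [hedef]; linarith
  -- uniform coefficient bounds
  obtain ⟨cA, hcA0, hcA1, hcA2⟩ := bound_of_tendsto hAp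
  obtain ⟨cC, hcC0, hcC1, hcC2⟩ := bound_of_tendsto hCp
  obtain ⟨cS, hcS0, hcS1, hcS2⟩ := bound_of_tendsto hSp
  obtain ⟨cm, hcm0, hcm1, hcm2⟩ := bound_of_tendsto hmp
  set c : ℝ := max (max cA cC) (max cS cm) with hcdef
  have hc0 : 0 ≤ c := le_trans hcA0 (le_trans (le_max_left _ _) (le_max_left _ _))
  have hbA : ∀ n i, ‖A n i‖ ≤ c := fun n i =>
    (norm_le_pi_norm (A n) i).trans ((hcA1 n).trans
      (le_trans (le_max_left _ _) (le_max_left _ _)))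
  have hbA' : ∀ i, ‖A' i‖ ≤ c := fun i =>
    (norm_le_pi_norm A' i).trans (hcA2.trans (le_trans (le_max_left _ _) (le_max_left _ _)))
  have hbC : ∀ n i, ‖C n i‖ ≤ c := fun n i =>
    (norm_le_pi_norm (C n) i).trans ((hcC1 n).trans
      (le_trans (le_max_right _ _) (le_max_left _ _)))
  have hbC' : ∀ i, ‖C' i‖ ≤ c := fun i =>
    (norm_le_pi_norm C' i).trans (hcC2.trans (le_trans (le_max_right _ _) (le_max_left _ _)))
  have hbS : ∀ n i, ‖S n i‖ ≤ c := fun n i =>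
    (norm_le_pi_norm (S n) i).trans ((hcS1 n).trans
      (le_trans (le_max_left _ _) (le_max_right _ _)))
  have hbm : ∀ n i j, |m n i j| ≤ c := fun n i j => by
    have h1 := norm_le_pi_norm (m n) i
    have h2 := norm_le_pi_norm (m n i) j
    rw [Real.norm_eq_abs] at h2
    exact (h2.trans h1).trans ((hcm1 n).trans
      (le_trans (le_max_right _ _) (le_max_right _ _)))
  -- E-valued derivatives
  have hK'E : ∀ t ∈ Icc (0:ℝ) T, HasDerivWithinAt K'
      (-(fun i => rhs' A' C' S' Q' m' (K' t) i)) (Icc (0:ℝ) T) t := by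
    intro t ht
    refine hasDerivWithinAt_pi.2 fun i => ?_
    have h := hK'.2.1 t ht i
    rwa [riccatiRHS_eq_rhs'] at h
  have hKE : ∀ n, ∀ t ∈ Icc (0:ℝ) T, HasDerivWithinAt (K n)
      (-(fun i => rhs' (A n) (C n) (S n) (Q n) (m n) (K n t) i)) (Icc (0:ℝ) T) t := by
    intro n t ht
    refine hasDerivWithinAt_pi.2 fun i => ?_
    have h := (hK n).2.1 t ht i
    rwa [riccatiRHS_eq_rhs'] at h
  have hK'cont : ContinuousOn K' (Icc 0 T) :=
    fun t ht => (hK'E t ht).continuousWithinAt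
  -- bound on the limit solution
  obtain ⟨M0, hM0⟩ := isCompact_Icc.exists_bound_of_continuousOn hK'cont
  set M : ℝ := max M0 0 with hMdef
  have hM : ∀ t ∈ Icc (0:ℝ) T, ‖K' t‖ ≤ M := fun t ht =>
    (hM0 t ht).trans (le_max_left _ _)
  have hM0' : 0 ≤ M := le_max_right _ _
  set r : ℝ := M + 1 with hrdef
  have hr0 : 0 ≤ r := by linarith
  -- constants
  set L : ℝ := ((d:ℝ)^2*c^2 + 2*d*c + 2*(d:ℝ)^2*c*r + N*c) + 1 with hLdef
  have hL : 0 < L := by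
    have h0 : (0:ℝ) ≤ (d:ℝ) := Nat.cast_nonneg d
    have h1 : (0:ℝ) ≤ (N:ℝ) := Nat.cast_nonneg N
    have e2 : (0:ℝ) ≤ (d:ℝ)^2 := by positivity
    nlinarith [mul_nonneg (mul_nonneg e2 hc0) hr0, mul_nonneg h0 hc0,
      mul_nonneg h1 hc0, mul_nonneg e2 (mul_nonneg hc0 hc0)]
  set C₂ : ℝ := 2*(d:ℝ)^2*c*r + 2*d*r + (d:ℝ)^2*r^2 + 1 + N*r with hC₂def
  have hC₂ : 0 ≤ C₂ := by
    have h0 : (0:ℝ) ≤ (d:ℝ) := Nat.cast_nonneg d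
    have h1 : (0:ℝ) ≤ (N:ℝ) := Nat.cast_nonneg N
    have e2 : (0:ℝ) ≤ (d:ℝ)^2 := by positivity
    nlinarith [mul_nonneg (mul_nonneg e2 hc0) hr0, mul_nonneg h0 hr0,
      mul_nonneg h1 hr0, mul_nonneg e2 (mul_nonneg hr0 hr0)]
  have hmap : MapsTo (fun s : ℝ => T - s) (Icc 0 T) (Icc 0 T) := by
    intro s hs
    rw [mem_Icc] at hs
    show T - s ∈ Icc 0 T
    rw [mem_Icc]
    constructor <;> linarith [hs.1, hs.2]
  -- the main per-n estimate
  have claim : ∀ n, gronwallBound 0 L (C₂ * e n) T ≤ 1/2 →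
      ∀ t ∈ Icc (0:ℝ) T, ‖K n t - K' t‖ ≤ gronwallBound 0 L (C₂ * e n) T := by
    intro n hsmall
    set εn : ℝ := C₂ * e n with hεndef
    have hεn0 : 0 ≤ εn := mul_nonneg hC₂ (he_nonneg n)
    set g : ℝ → (Fin N → Matrix (Fin d) (Fin d) ℝ) :=
      fun s => K n (T - s) - K' (T - s) with hgdef
    have hgderiv : ∀ s ∈ Icc (0:ℝ) T, HasDerivWithinAt g
        ((fun i => rhs' (A n) (C n) (S n) (Q n) (m n) (K n (T - s)) i)
          - (fun i => rhs' A' C' S' Q' m' (K' (T - s)) i)) (Icc (0:ℝ) T) s := by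
      intro s hs
      have h1 : HasDerivWithinAt (fun u : ℝ => T - u) (-1) (Icc (0:ℝ) T) s := by
        simpa using (hasDerivWithinAt_id s (Icc (0:ℝ) T)).const_sub T
      have h2 := (hKE n (T - s) (hmap hs)).scomp s h1 hmap
      have h3 := (hK'E (T - s) (hmap hs)).scomp s h1 hmap
      have h4 := h2.sub h3
      exact h4.congr_deriv (by ext i a b; simp [smul_neg])
    have hgcont : ContinuousOn g (Icc 0 T) :=
      fun s hs => (hgderiv s hs).continuousWithinAt
    have hg0 : g 0 = 0 := by
      funext i
      simp [hgdef, (hK n).2.2 i, hK'.2.2 i]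
    -- the good set and continuous induction
    set sset : Set ℝ :=
      {x | ∀ u ∈ Icc (0:ℝ) T, u ≤ x → ‖g u‖ ≤ gronwallBound 0 L εn u} with hssetdef
    have hSgood : IsClosed {u | u ∈ Icc (0:ℝ) T ∧ ‖g u‖ ≤ gronwallBound 0 L εn u} := by
      have hβcont : Continuous (gronwallBound 0 L εn) := by
        rw [gronwallBound_of_K_ne_0 hL.ne']
        fun_prop
      have heq : {u | u ∈ Icc (0:ℝ) T ∧ ‖g u‖ ≤ gronwallBound 0 L εn u}
          = Icc (0:ℝ) T ∩ (fun u => ‖g u‖ - gronwallBound 0 L εn u) ⁻¹' Iic 0 := by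
        ext u; simp [sub_nonpos]
      rw [heq]
      exact ContinuousOn.preimage_isClosed_of_isClosed
        (hgcont.norm.sub hβcont.continuousOn) isClosed_Icc isClosed_Iic
    have hmem_good : ∀ x ∈ sset ∩ Icc (0:ℝ) T,
        x ∈ {u | u ∈ Icc (0:ℝ) T ∧ ‖g u‖ ≤ gronwallBound 0 L εn u} :=
      fun x hx => ⟨hx.2, hx.1 x hx.2 le_rfl⟩
    have hclosed : IsClosed (sset ∩ Icc 0 T) := by
      apply isClosed_of_closure_subset
      intro x hx
      have hxIcc : x ∈ Icc (0:ℝ) T :=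
        isClosed_Icc.closure_subset (closure_mono inter_subset_right hx)
      refine ⟨?_, hxIcc⟩
      intro u hu hux
      rcases eq_or_lt_of_le hux with rfl | hlt
      · have hx2 : u ∈ closure {v | v ∈ Icc (0:ℝ) T ∧ ‖g v‖ ≤ gronwallBound 0 L εn v} :=
          closure_mono hmem_good hx
        exact (hSgood.closure_subset hx2).2
      · obtain ⟨y, hy, hxy⟩ := Metric.mem_closure_iff.1 hx (x - u) (by linarith)
        have hyu : u ≤ y := by
          rw [Real.dist_eq] at hxy
          have := abs_lt.1 hxy
          linarith [this.1, this.2]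
        exact hy.1 u hu hyu
    have h0mem : (0:ℝ) ∈ sset := by
      intro u hu hu0
      have hu0' : u = 0 := le_antisymm hu0 hu.1
      subst hu0'
      simp [hg0, gronwallBound_x0]
    have hsub : Icc (0:ℝ) T ⊆ sset := by
      apply hclosed.Icc_subset_of_forall_exists_gt h0mem
      rintro x ⟨hxs, hx0, hxT⟩ y hy
      have hgx12 : ‖g x‖ ≤ 1/2 :=
        le_trans (hxs x ⟨hx0, hxT.le⟩ le_rfl)
          (le_trans (gb_mono hL hεn0 hxT.le) hsmall)
      have hcontx : ContinuousWithinAt (fun u => ‖g u‖) (Icc 0 T) x :=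
        (hgcont x ⟨hx0, hxT.le⟩).norm
      have hev : ∀ᶠ u in 𝓝[Icc (0:ℝ) T] x, ‖g u‖ < 1 :=
        hcontx.eventually_lt_const (by linarith)
      obtain ⟨δ, hδ0, hδ⟩ := Metric.mem_nhdsWithin_iff.1 hev
      set b : ℝ := min (min (x + δ/2) y) T with hbdef
      have hxb : x < b := lt_min (lt_min (by linarith) hy) hxT
      have hbT : b ≤ T := min_le_right _ _
      have hb0 : (0:ℝ) ≤ b := le_trans hx0 hxb.le
      have hbound1 : ∀ u ∈ Icc (0:ℝ) b, ‖g u‖ ≤ 1 := by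
        intro u hu
        rcases le_or_gt u x with h | h
        · exact le_trans (hxs u ⟨hu.1, le_trans h hxT.le⟩ h)
            (le_trans (gb_mono hL hεn0 (le_trans h hxT.le))
              (le_trans hsmall (by norm_num)))
        · refine le_of_lt (hδ ?_)
          constructor
          · rw [Metric.mem_ball, Real.dist_eq, abs_lt]
            have hub : u ≤ x + δ/2 :=
              le_trans hu.2 (le_trans (min_le_left _ _) (min_le_left _ _))
            constructor <;> linarith
          · exact ⟨hu.1, le_trans hu.2 hbT⟩
      have hgron := norm_le_gronwallBound_of_norm_deriv_right_le
        (f := g)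
        (f' := fun u => (fun i => rhs' (A n) (C n) (S n) (Q n) (m n) (K n (T - u)) i)
          - (fun i => rhs' A' C' S' Q' m' (K' (T - u)) i))
        (δ := 0) (K := L) (ε := εn) (a := 0) (b := b)
        (hgcont.mono (Icc_subset_Icc_right hbT))
        (fun u hu => (hgderiv u ⟨hu.1, le_trans hu.2.le hbT⟩).mono_of_mem_nhdsWithin
          (mem_of_superset (Icc_mem_nhdsGE_of_mem ⟨le_refl u, lt_of_lt_of_le hu.2 hbT⟩)
            (Icc_subset_Icc hu.1 le_rfl)))
        (by simp [hg0])
        ?_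
      · refine ⟨b, ?_, hxb, le_trans (min_le_left _ _) (min_le_right _ _)⟩
        intro u hu hub
        have := hgron u ⟨hu.1, hub⟩
        rwa [sub_zero] at this
      · -- the derivative bound
        intro u hu
        have huT : u ∈ Icc (0:ℝ) T := ⟨hu.1, le_trans hu.2.le hbT⟩
        have htmem : T - u ∈ Icc (0:ℝ) T := hmap huT
        have hgu1 : ‖g u‖ ≤ 1 := hbound1 u ⟨hu.1, hu.2.le⟩
        have hYb : ‖K' (T - u)‖ ≤ M := hM _ htmem
        have hXb : ‖K n (T - u)‖ ≤ r := by
          have h1 : K n (T - u) = g u + K' (T - u) := by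
            simp [hgdef]
          rw [h1]
          refine (norm_add_le _ _).trans ?_
          rw [hrdef]; linarith
        have hlip := rhs'_lipschitz (N := N) (Q := Q n) (X := K n (T - u)) (Y := K' (T - u)) hc0 hr0
          (fun i => hbA n i) (fun i => hbC n i) (fun i => hbS n i) (fun i j => hbm n i j)
          hXb (hYb.trans (by rw [hrdef]; linarith))
        have hpar := rhs'_param_diff (N := N) (Y := K' (T - u)) hc0 hr0 (he_nonneg n)
          (fun i => hbC n i) hbC'
          (fun i => hdA n i) (fun i => hdC n i) (fun i => hdS n i) (fun i => hdQ n i)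
          (fun i j => hdm n i j) (hYb.trans (by rw [hrdef]; linarith))
        have hsplit :
            (fun i => rhs' (A n) (C n) (S n) (Q n) (m n) (K n (T - u)) i)
              - (fun i => rhs' A' C' S' Q' m' (K' (T - u)) i)
            = ((fun i => rhs' (A n) (C n) (S n) (Q n) (m n) (K n (T - u)) i)
              - (fun i => rhs' (A n) (C n) (S n) (Q n) (m n) (K' (T - u)) i))
            + ((fun i => rhs' (A n) (C n) (S n) (Q n) (m n) (K' (T - u)) i)
              - (fun i => rhs' A' C' S' Q' m' (K' (T - u)) i)) := by
          rw [sub_add_sub_cancel]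
        show ‖(fun i => rhs' (A n) (C n) (S n) (Q n) (m n) (K n (T - u)) i)
              - (fun i => rhs' A' C' S' Q' m' (K' (T - u)) i)‖ ≤ L * ‖g u‖ + εn
        rw [hsplit]
        refine (norm_add_le _ _).trans ?_
        have hXY : K n (T - u) - K' (T - u) = g u := rfl
        rw [hXY] at hlip
        have hstep1 : ((d:ℝ)^2*c^2 + 2*d*c + 2*(d:ℝ)^2*c*r + N*c) * ‖g u‖ ≤ L * ‖g u‖ := by
          have := norm_nonneg (g u)
          rw [hLdef]; nlinarith
        have hεeq : εn = (2*(d:ℝ)^2*c*r + 2*d*r + (d:ℝ)^2*r^2 + 1 + N*r) * e n := by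
          rw [hεndef, hC₂def]
        linarith [hlip, hpar, hstep1, hεeq]
    -- conclude the claim
    intro t ht
    have hTs : T ∈ sset := hsub (right_mem_Icc.2 hT.le)
    have hu : T - t ∈ Icc (0:ℝ) T := hmap ht
    have h1 := hTs (T - t) hu (by linarith [ht.1])
    have h2 : g (T - t) = K n t - K' t := by
      simp [hgdef, sub_sub_cancel]
    rw [h2] at h1
    exact le_trans h1 (gb_mono hL hεn0 hu.2)
  -- conclusion
  intro i
  refine Metric.tendstoUniformlyOn_iff.2 ?_
  intro ε hε
  have hβtend : Tendsto (fun n => gronwallBound 0 L (C₂ * e n) T) atTop (𝓝 0) := by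
    have heq : (fun n => gronwallBound 0 L (C₂ * e n) T)
        = fun n => (C₂ * e n)/L * (Real.exp (L*T) - 1) := by
      funext n
      rw [gronwallBound_of_K_ne_0 hL.ne']
      simp
    rw [heq]
    have h1 : Tendsto (fun n => C₂ * e n) atTop (𝓝 (C₂ * 0)) := he0.const_mul C₂
    have h2 := (h1.div_const L).mul_const (Real.exp (L*T) - 1)
    simpa using h2
  have hevβ : ∀ᶠ n in atTop, gronwallBound 0 L (C₂ * e n) T < min (1/2) ε :=
    hβtend.eventually_lt_const (lt_min (by norm_num) hε)
  filter_upwards [hevβ] with n hn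
  intro t ht
  have h12 : gronwallBound 0 L (C₂ * e n) T ≤ 1/2 :=
    le_trans hn.le (min_le_left _ _)
  have hcl := claim n h12 t ht
  have hcomp : dist (K' t i) (K n t i) ≤ ‖K n t - K' t‖ := by
    rw [dist_comm, dist_eq_norm]
    exact norm_le_pi_norm (K n t - K' t) i
  calc dist (K' t i) (K n t i) ≤ ‖K n t - K' t‖ := hcomp
    _ ≤ gronwallBound 0 L (C₂ * e n) T := hcl
    _ < ε := lt_of_lt_of_le hn (min_le_right _ _)
end
end

section
/- Robustness of the LQ optimal feedback gains: under the hypotheses of the continuity result—coefficient data (A_n, B_n, C_n, Q_n, R_n, m^n) with common terminal matrices P(i) converging entrywise to a coefficient datum (A, B, C, Q, R, m, P) with each R(i) positive definite, K_n the solution of the n-th coupled Riccati system and K the unique solution of the limit coupled Riccati system—the feedback gain matrices converge uniformly in time: for every i ∈ S, sup_{t∈[0,T]} ‖R_n(i)⁻¹ B_n(i)ᵀ K_n(t,i) − R(i)⁻¹ B(i)ᵀ K(t,i)‖ → 0 as n → ∞. In particular, for every (t, x, i) ∈ [0,T] × ℝ^d × S, the optimal feedback controls v_n*(t,x,i) :=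 −R_n(i)⁻¹ B_n(i)ᵀ K_n(t,i) x of the approximating models converge to the optimal feedback control v*(t,x,i) := −R(i)⁻¹ B(i)ᵀ K(t,i) x of the true model, i.e. |v_n*(t,x,i) − v*(t,x,i)| → 0. -/
open Matrix Set Filter Topology

attribute [local instance] Matrix.normedAddCommGroup Matrix.normedSpace

noncomputable section

namespace RiccatiAux

variable {d l N : ℕ}

lemma norm_matmul_le {a b c : ℕ} (X : Matrix (Fin a) (Fin b) ℝ) (Y : Matrix (Fin b) (Fin c) ℝ) :
    ‖X * Y‖ ≤ (b : ℝ) * ‖X‖ * ‖Y‖ := by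
  rw [Matrix.norm_le_iff (by positivity)]
  intro i j
  calc ‖(X * Y) i j‖ = ‖∑ k, X i k * Y k j‖ := by rfl
    _ ≤ ∑ k, ‖X i k * Y k j‖ := norm_sum_le _ _
    _ ≤ ∑ _k : Fin b, ‖X‖ * ‖Y‖ := by
        refine Finset.sum_le_sum fun k _ => ?_
        rw [norm_mul]
        exact mul_le_mul (Matrix.norm_entry_le_entrywise_sup_norm X)
          (Matrix.norm_entry_le_entrywise_sup_norm Y) (norm_nonneg _) (norm_nonneg _)
    _ = (b : ℝ) * ‖X‖ * ‖Y‖ := by simp [mul_assoc]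

lemma isBoundedBilinearMap_matmul {a b c : ℕ} :
    IsBoundedBilinearMap ℝ
      (fun x : Matrix (Fin a) (Fin b) ℝ × Matrix (Fin b) (Fin c) ℝ => x.1 * x.2) where
  add_left := fun x₁ x₂ y => Matrix.add_mul x₁ x₂ y
  smul_left := fun r x y => Matrix.smul_mul r x y
  add_right := fun x y₁ y₂ => Matrix.mul_add x y₁ y₂
  smul_right := fun r x y => Matrix.mul_smul x r y
  bound := ⟨(b : ℝ) + 1, by positivity, fun x y => by
    refine (norm_matmul_le x y).trans ?_
    have h : (b : ℝ) ≤ (b : ℝ) + 1 := by linarith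
    have := mul_le_mul_of_nonneg_right (mul_le_mul_of_nonneg_right h (norm_nonneg x)) (norm_nonneg y)
    linarith⟩

lemma _root_.ContDiff.matmul {X : Type*} [NormedAddCommGroup X] [NormedSpace ℝ X] {n : WithTop ℕ∞}
    {a b c : ℕ} {f : X → Matrix (Fin a) (Fin b) ℝ} {g : X → Matrix (Fin b) (Fin c) ℝ}
    (hf : ContDiff ℝ n f) (hg : ContDiff ℝ n g) : ContDiff ℝ n fun x => f x * g x :=
  isBoundedBilinearMap_matmul.contDiff.comp (hf.prodMk hg)

lemma _root_.ContDiff.mtranspose {X : Type*} [NormedAddCommGroup X] [NormedSpace ℝ X] {n : WithTop ℕ∞}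
    {a b : ℕ} {f : X → Matrix (Fin a) (Fin b) ℝ} (hf : ContDiff ℝ n f) :
    ContDiff ℝ n fun x => (f x)ᵀ := by
  exact (((Matrix.transposeLinearEquiv (Fin a) (Fin b) ℝ ℝ).toLinearMap.toContinuousLinearMap).contDiff).comp hf

abbrev E (d N : ℕ) := Fin N → Matrix (Fin d) (Fin d) ℝ

abbrev Par (d l N : ℕ) :=
  (Fin N → Matrix (Fin d) (Fin d) ℝ) × (Fin N → Matrix (Fin d) (Fin d) ℝ) ×
  (Fin N → Matrix (Fin d) (Fin l) ℝ) × (Fin N → Matrix (Fin d) (Fin d) ℝ) ×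
  (Fin N → Matrix (Fin l) (Fin l) ℝ) × (Fin N → Fin N → ℝ)

/-- The (forward-time) Riccati vector field, jointly in parameters and state. -/
def vf (p : Par d l N) (K : E d N) : E d N := fun i =>
  (p.2.1 i)ᵀ * K i * p.2.1 i + (p.1 i)ᵀ * K i + K i * p.1 i
    - K i * p.2.2.1 i * p.2.2.2.2.1 i * (p.2.2.1 i)ᵀ * K i + p.2.2.2.1 i
    + ∑ j, p.2.2.2.2.2 i j • K j

lemma vf_eq_riccatiRHS (A C Q : Fin N → Matrix (Fin d) (Fin d) ℝ)
    (B : Fin N → Matrix (Fin d) (Fin l) ℝ) (R : Fin N → Matrix (Fin l) (Fin l) ℝ)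
    (m : Fin N → Fin N → ℝ) (K : E d N) :
    vf (A, C, B, Q, fun i => (R i)⁻¹, m) K = riccatiRHS A C B Q R m K := rfl

lemma proj_contDiff {Y : Type} [NormedAddCommGroup Y] [NormedSpace ℝ Y]
    {X : Type*} [NormedAddCommGroup X] [NormedSpace ℝ X]
    {f : X → Fin N → Y} (hf : ContDiff ℝ 1 f) (j : Fin N) :
    ContDiff ℝ 1 fun q => f q j := by
  exact (ContinuousLinearMap.proj (R := ℝ) (φ := fun _ : Fin N => Y) j).contDiff.comp hf

lemma contDiff_vf : ContDiff ℝ 1 (fun q : Par d l N × E d N => vf q.1 q.2) := by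
  rw [contDiff_pi]
  intro i
  have hA : ContDiff ℝ 1 fun q : Par d l N × E d N => q.1.1 i :=
    proj_contDiff (contDiff_fst.fst) i
  have hC : ContDiff ℝ 1 fun q : Par d l N × E d N => q.1.2.1 i :=
    proj_contDiff (contDiff_fst.snd.fst) i
  have hB : ContDiff ℝ 1 fun q : Par d l N × E d N => q.1.2.2.1 i :=
    proj_contDiff (contDiff_fst.snd.snd.fst) i
  have hQ : ContDiff ℝ 1 fun q : Par d l N × E d N => q.1.2.2.2.1 i :=
    proj_contDiff (contDiff_fst.snd.snd.snd.fst) i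
  have hS : ContDiff ℝ 1 fun q : Par d l N × E d N => q.1.2.2.2.2.1 i :=
    proj_contDiff (contDiff_fst.snd.snd.snd.snd.fst) i
  have hm : ∀ j, ContDiff ℝ 1 fun q : Par d l N × E d N => q.1.2.2.2.2.2 i j := fun j =>
    proj_contDiff (proj_contDiff (contDiff_fst.snd.snd.snd.snd.snd) i) j
  have hK : ∀ j, ContDiff ℝ 1 fun q : Par d l N × E d N => q.2 j := fun j =>
    proj_contDiff (contDiff_snd) j
  exact ((((((hC.mtranspose.matmul (hK i)).matmul hC).add
      (hA.mtranspose.matmul (hK i))).add ((hK i).matmul hA)).sub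
      (((((hK i).matmul hB).matmul hS).matmul hB.mtranspose).matmul (hK i))).add hQ).add
      (ContDiff.sum fun j _ => (hm j).smul (hK j))

lemma contDiff_vf_fixed (p : Par d l N) : ContDiff ℝ 1 (vf p) := by
  rw [contDiff_pi]
  intro i
  have hK : ∀ j, ContDiff ℝ 1 fun q : E d N => q j := fun j =>
    proj_contDiff contDiff_id j
  exact ((((((ContDiff.matmul (contDiff_const.mtranspose) (hK i)).matmul contDiff_const).add
      ((contDiff_const.mtranspose).matmul (hK i))).add ((hK i).matmul contDiff_const)).sub
      (((((hK i).matmul contDiff_const).matmul contDiff_const).matmul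
        (contDiff_const.mtranspose)).matmul (hK i))).add contDiff_const).add
      (ContDiff.sum fun j _ => (hK j).const_smul _)

end RiccatiAux
-- chunk 2, appended to a.lean content for testing
section Chunk2
open Metric
variable {d l N : ℕ}

lemma RiccatiAux.tendstoUniformlyOn_vf {c : ℕ → RiccatiAux.Par d l N} {c' : RiccatiAux.Par d l N}
    (hc : Tendsto c atTop (𝓝 c')) {s : Set (RiccatiAux.E d N)} (hs : IsCompact s) :
    TendstoUniformlyOn (fun n K => RiccatiAux.vf (c n) K) (RiccatiAux.vf c') atTop s := by
  classical
  let F : C(RiccatiAux.Par d l N × RiccatiAux.E d N, RiccatiAux.E d N) :=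
    ⟨fun q => RiccatiAux.vf q.1 q.2, RiccatiAux.contDiff_vf.continuous⟩
  let G := ContinuousMap.curry F
  have hG : Tendsto (fun n => G (c n)) atTop (𝓝 (G c')) := (G.continuous.tendsto c').comp hc
  exact ContinuousMap.tendsto_iff_forall_isCompact_tendstoUniformlyOn.mp hG s hs

set_option maxHeartbeats 1000000 in
lemma RiccatiAux.exists_lipschitzOnWith_vf (p : RiccatiAux.Par d l N) (M : ℝ) :
    ∃ L : NNReal, 1 ≤ L ∧ LipschitzOnWith L (RiccatiAux.vf p) (closedBall (0 : RiccatiAux.E d N) M) := by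
  have hv : ContDiff ℝ 1 (RiccatiAux.vf p) := RiccatiAux.contDiff_vf_fixed p
  have hdiff : Differentiable ℝ (RiccatiAux.vf p) := hv.differentiable one_ne_zero
  have hfc : Continuous (fderiv ℝ (RiccatiAux.vf p)) := hv.continuous_fderiv one_ne_zero
  obtain ⟨C, hC⟩ := (hv.locallyLipschitz.locallyLipschitzOn
    (s := closedBall (0 : RiccatiAux.E d N) M)).exists_lipschitzOnWith_of_compact
    (isCompact_closedBall (0 : RiccatiAux.E d N) M)
  exact ⟨C + 1, le_add_self, hC.weaken le_self_add⟩

lemma RiccatiAux.reversed_deriv (T : ℝ)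
    (A C Q : Fin N → Matrix (Fin d) (Fin d) ℝ)
    (B : Fin N → Matrix (Fin d) (Fin l) ℝ)
    (R : Fin N → Matrix (Fin l) (Fin l) ℝ)
    (m : Fin N → Fin N → ℝ)
    (P : Fin N → Matrix (Fin d) (Fin d) ℝ)
    (K : ℝ → Fin N → Matrix (Fin d) (Fin d) ℝ)
    (hK : IsRiccatiSolution T A C B Q R m P K)
    {t : ℝ} (ht : t ∈ Icc (0:ℝ) T) :
    HasDerivWithinAt (fun s => K (T - s))
      (RiccatiAux.vf (A, C, B, Q, fun i => (R i)⁻¹, m) (K (T - t))) (Icc (0:ℝ) T) t := by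
  have hmem : T - t ∈ Icc (0:ℝ) T := ⟨by linarith [ht.2], by linarith [ht.1]⟩
  refine hasDerivWithinAt_pi.mpr ?_
  intro i
  have hh : HasDerivWithinAt (fun s : ℝ => T - s) (-1) (Icc (0:ℝ) T) t := by
    simpa using (hasDerivWithinAt_id t (Icc (0:ℝ) T)).const_sub T
  have hmaps : MapsTo (fun s : ℝ => T - s) (Icc (0:ℝ) T) (Icc (0:ℝ) T) := fun s hs => by
    refine mem_Icc.mpr ⟨?_, ?_⟩ <;> simp only [] <;> [linarith [hs.2]; linarith [hs.1]]
  have hKi := hK.2.1 (T - t) hmem i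
  have := HasDerivWithinAt.scomp t hKi hh hmaps
  simpa [RiccatiAux.vf_eq_riccatiRHS, Function.comp_def] using this
end Chunk2

section Chunk3
open Metric
variable {d l N : ℕ}

lemma RiccatiAux.key_estimate
    {T : ℝ} (hT : 0 < T) {v vn : RiccatiAux.E d N → RiccatiAux.E d N}
    {Lc : NNReal} {M' : ℝ}
    (hLc : (0:ℝ) < (Lc : ℝ))
    (hLip : LipschitzOnWith Lc v (closedBall (0 : RiccatiAux.E d N) (M' + 1)))
    {f g : ℝ → RiccatiAux.E d N}
    (hfc : ContinuousOn f (Icc 0 T))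
    (hf' : ∀ t ∈ Icc (0:ℝ) T, HasDerivWithinAt f (vn (f t)) (Icc (0:ℝ) T) t)
    (hgc : ContinuousOn g (Icc 0 T))
    (hg' : ∀ t ∈ Icc (0:ℝ) T, HasDerivWithinAt g (v (g t)) (Icc (0:ℝ) T) t)
    (hgM : ∀ t ∈ Icc (0:ℝ) T, ‖g t‖ ≤ M')
    (hfg0 : f 0 = g 0)
    {ε : ℝ} (hε : 0 < ε)
    (hsmall : ε * ((Real.exp (Lc * T) - 1) / Lc) ≤ 1/2)
    (hvn : ∀ x ∈ closedBall (0 : RiccatiAux.E d N) (M' + 1), dist (vn x) (v x) ≤ ε) :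
    ∀ t ∈ Icc (0:ℝ) T, dist (f t) (g t) ≤ ε * ((Real.exp (Lc * T) - 1) / Lc) := by
  have hM' : 0 ≤ M' := (norm_nonneg _).trans (hgM 0 ⟨le_rfl, hT.le⟩)
  set CC : ℝ := (Real.exp (Lc * T) - 1) / Lc with hCC
  -- derivatives within `Ici`
  have hf'' : ∀ t ∈ Ico (0:ℝ) T, HasDerivWithinAt f (vn (f t)) (Ici t) t := fun t ht =>
    (hf' t (Ico_subset_Icc_self ht)).mono_of_mem_nhdsWithin (Icc_mem_nhdsGE_of_mem ht)
  have hg'' : ∀ t ∈ Ico (0:ℝ) T, HasDerivWithinAt g (v (g t)) (Ici t) t := fun t ht =>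
    (hg' t (Ico_subset_Icc_self ht)).mono_of_mem_nhdsWithin (Icc_mem_nhdsGE_of_mem ht)
  -- the time-dependent sets
  set sb : ℝ → Set (RiccatiAux.E d N) := fun t => closedBall (g (min (max t 0) T)) 1 with hsb
  have hproj : ∀ t ∈ Icc (0:ℝ) T, min (max t 0) T = t := fun t ht => by
    rw [max_eq_left ht.1, min_eq_left ht.2]
  have hsub : ∀ t, sb t ⊆ closedBall (0 : RiccatiAux.E d N) (M' + 1) := by
    intro t x hx
    have h1 : min (max t 0) T ∈ Icc (0:ℝ) T :=
      ⟨le_min (le_max_right _ _) hT.le, min_le_right _ _⟩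
    have h2 : ‖g (min (max t 0) T)‖ ≤ M' := hgM _ h1
    have h3 : dist x (g (min (max t 0) T)) ≤ 1 := mem_closedBall.mp hx
    have : dist x 0 ≤ dist x (g (min (max t 0) T)) + dist (g (min (max t 0) T)) 0 :=
      dist_triangle _ _ _
    rw [mem_closedBall]
    simp only [dist_zero_right] at this ⊢
    linarith
  have hvs : ∀ t, LipschitzOnWith Lc v (sb t) := fun t => hLip.mono (hsub t)
  -- Gronwall on an initial segment where `dist f g ≤ 1`
  have gron : ∀ x ∈ Icc (0:ℝ) T, (∀ u ∈ Icc (0:ℝ) x, dist (f u) (g u) ≤ 1) →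
      ∀ t ∈ Icc (0:ℝ) x, dist (f t) (g t) ≤ ε * CC := by
    intro x hx hgood
    have hballs : ∀ t ∈ Ico (0:ℝ) x, f t ∈ sb t := by
      intro t ht
      have htIcc : t ∈ Icc (0:ℝ) T := ⟨ht.1, ht.2.le.trans hx.2⟩
      rw [hsb]; simp only [hproj t htIcc, mem_closedBall]
      exact hgood t ⟨ht.1, ht.2.le⟩
    have key := dist_le_of_approx_trajectories_ODE_of_mem (v := fun _ => v) (s := sb)
      (εf := ε) (εg := 0) (δ := 0)
      (fun t _ => hvs t)
      (hfc.mono (Icc_subset_Icc_right hx.2))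
      (fun t ht => hf'' t ⟨ht.1, lt_of_lt_of_le ht.2 hx.2⟩)
      (fun t ht => by
        have := hvn (f t) (hsub t (hballs t ht))
        simpa using this)
      hballs
      (hgc.mono (Icc_subset_Icc_right hx.2))
      (fun t ht => hg'' t ⟨ht.1, lt_of_lt_of_le ht.2 hx.2⟩)
      (fun t ht => by simp)
      (fun t ht => by
        have htIcc : t ∈ Icc (0:ℝ) T := ⟨ht.1, ht.2.le.trans hx.2⟩
        rw [hsb]; simp only [hproj t htIcc, mem_closedBall, dist_self]; norm_num)
      (by rw [hfg0, dist_self])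
    intro t ht
    have h1 := key t ht
    have hLne : (Lc : ℝ) ≠ 0 := ne_of_gt hLc
    rw [gronwallBound_of_K_ne_0 hLne] at h1
    have h2 : Real.exp (Lc * (t - 0)) ≤ Real.exp (Lc * T) := by
      apply Real.exp_le_exp.mpr
      have := ht.2.trans hx.2
      nlinarith
    have h3 : (0:ℝ) ≤ ε / Lc := by positivity
    calc dist (f t) (g t) ≤ 0 * Real.exp (↑Lc * (t - 0)) +
          (ε + 0) / ↑Lc * (Real.exp (↑Lc * (t - 0)) - 1) := h1
      _ = ε / Lc * (Real.exp (↑Lc * (t - 0)) - 1) := by ring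
      _ ≤ ε / Lc * (Real.exp (↑Lc * T) - 1) := by
          apply mul_le_mul_of_nonneg_left _ h3
          linarith
      _ = ε * CC := by rw [hCC]; ring
  have hεCC : 0 ≤ ε * CC := by
    have hpos : (0:ℝ) < (Lc:ℝ) * T := by positivity
    have h2 : (1:ℝ) < Real.exp ((Lc:ℝ) * T) := by
      have := Real.add_one_lt_exp hpos.ne'
      linarith
    have hCCpos : 0 < CC := by rw [hCC]; apply div_pos (by linarith) hLc
    exact le_of_lt (mul_pos hε hCCpos)
  -- bootstrap set
  set S : Set ℝ := {b : ℝ | ∀ u ∈ Icc (0:ℝ) b, u ≤ T → dist (f u) (g u) ≤ 1} with hS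
  have hφ : ContinuousOn (fun u => dist (f u) (g u)) (Icc (0:ℝ) T) :=
    continuous_dist.comp_continuousOn (hfc.prodMk hgc)
  have hclosed : IsClosed (S ∩ Icc 0 T) := by
    apply IsSeqClosed.isClosed
    intro seq b hb htend
    have hbIcc : b ∈ Icc (0:ℝ) T :=
      isClosed_Icc.mem_of_tendsto htend (Eventually.of_forall fun k => (hb k).2)
    refine ⟨?_, hbIcc⟩
    intro u hu huT
    by_cases hcase : ∃ k, u ≤ seq k
    · obtain ⟨k, hk⟩ := hcase
      exact (hb k).1 u ⟨hu.1, hk⟩ huT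
    · push_neg at hcase
      have hub : u = b := le_antisymm hu.2
        (le_of_tendsto htend (Eventually.of_forall fun k => (hcase k).le))
      subst hub
      have htend2 : Tendsto seq atTop (𝓝[Icc (0:ℝ) T] u) :=
        tendsto_nhdsWithin_of_tendsto_nhds_of_eventually_within _ htend
          (Eventually.of_forall fun k => (hb k).2)
      have hphitend := ((hφ u ⟨hu.1, huT⟩).tendsto).comp htend2
      refine le_of_tendsto hphitend (Eventually.of_forall fun k => ?_)
      exact (hb k).1 (seq k) ⟨(hb k).2.1, le_rfl⟩ (hb k).2.2
  have hzero : (0:ℝ) ∈ S := by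
    intro u hu _
    have : u = 0 := le_antisymm hu.2 hu.1
    rw [this, hfg0, dist_self]; norm_num
  have hbig : Icc (0:ℝ) T ⊆ S := by
    apply IsClosed.Icc_subset_of_forall_exists_gt hclosed hzero
    rintro x ⟨hxS, hxIco⟩ y hy
    have hgood : ∀ u ∈ Icc (0:ℝ) x, dist (f u) (g u) ≤ 1 := fun u hu =>
      hxS u hu (hu.2.trans hxIco.2.le)
    have hhalf := gron x ⟨hxIco.1, hxIco.2.le⟩ hgood
    have hφx : dist (f x) (g x) ≤ 1/2 :=
      (hhalf x ⟨hxIco.1, le_rfl⟩).trans hsmall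
    -- continuity at x gives a δ
    have hcw : ContinuousWithinAt (fun u => dist (f u) (g u)) (Icc (0:ℝ) T) x :=
      hφ x ⟨hxIco.1, hxIco.2.le⟩
    rw [Metric.continuousWithinAt_iff] at hcw
    obtain ⟨δ, hδpos, hδ⟩ := hcw (1/4) (by norm_num)
    set x' := min (min (x + δ/2) y) T with hx'
    have hx'gtx : x < x' := by
      apply lt_min (lt_min (by linarith) hy) hxIco.2
    have hx'leT : x' ≤ T := min_le_right _ _
    have hx'ley : x' ≤ y := le_trans (min_le_left _ _) (min_le_right _ _)
    refine ⟨x', ?_, hx'gtx, hx'ley⟩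
    intro u hu huT
    rcases le_or_gt u x with hc | hc
    · exact hgood u ⟨hu.1, hc⟩
    · have hu1 : u ∈ Icc (0:ℝ) T := ⟨hu.1, huT⟩
      have hu2 : u - x ≤ δ/2 := by
        have : u ≤ x + δ/2 := hu.2.trans (le_trans (min_le_left _ _) (min_le_left _ _))
        linarith
      have hdist : dist u x < δ := by
        rw [Real.dist_eq, abs_of_pos (by linarith : (0:ℝ) < u - x)]
        linarith
      have := hδ hu1 hdist
      rw [Real.dist_eq] at this
      have habs := abs_lt.mp this
      linarith [habs.1, habs.2, hφx]
  have hTS : ∀ u ∈ Icc (0:ℝ) T, dist (f u) (g u) ≤ 1 := fun u hu =>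
    (hbig ⟨hu.1.trans hu.2, le_rfl⟩ : T ∈ S) u ⟨hu.1, hu.2⟩ hu.2
  exact gron T ⟨le_rfl.trans hT.le, le_rfl⟩ hTS

end Chunk3

open Metric in
/-- Robustness of the LQ optimal feedback gains: the feedback gain matrices of the
approximating models converge uniformly in time to that of the true model, and
consequently the optimal feedback controls converge pointwise. -/
theorem lq_feedback_robustness
    (d l N : ℕ) (hd : 0 < d) (hl : 0 < l) (hN : 0 < N)
    (T : ℝ) (hT : 0 < T)
    (A C Q : ℕ → Fin N → Matrix (Fin d) (Fin d) ℝ)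
    (B : ℕ → Fin N → Matrix (Fin d) (Fin l) ℝ)
    (R : ℕ → Fin N → Matrix (Fin l) (Fin l) ℝ)
    (m : ℕ → Fin N → Fin N → ℝ)
    (P : Fin N → Matrix (Fin d) (Fin d) ℝ)
    (hQ : ∀ n i, (Q n i).PosSemidef)
    (hR : ∀ n i, (R n i).PosDef)
    (hP : ∀ i, (P i).PosDef)
    (hm₁ : ∀ n i j, i ≠ j → 0 ≤ m n i j)
    (hm₂ : ∀ n i, ∑ j, m n i j = 0)
    (A' C' Q' : Fin N → Matrix (Fin d) (Fin d) ℝ)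
    (B' : Fin N → Matrix (Fin d) (Fin l) ℝ)
    (R' : Fin N → Matrix (Fin l) (Fin l) ℝ)
    (m' : Fin N → Fin N → ℝ)
    (hQ' : ∀ i, (Q' i).PosSemidef)
    (hR' : ∀ i, (R' i).PosDef)
    (hm₁' : ∀ i j, i ≠ j → 0 ≤ m' i j)
    (hm₂' : ∀ i, ∑ j, m' i j = 0)
    (hAconv : ∀ i, Tendsto (fun n => A n i) atTop (𝓝 (A' i)))
    (hBconv : ∀ i, Tendsto (fun n => B n i) atTop (𝓝 (B' i)))
    (hCconv : ∀ i, Tendsto (fun n => C n i) atTop (𝓝 (C' i)))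
    (hQconv : ∀ i, Tendsto (fun n => Q n i) atTop (𝓝 (Q' i)))
    (hRconv : ∀ i, Tendsto (fun n => R n i) atTop (𝓝 (R' i)))
    (hmconv : ∀ i j, Tendsto (fun n => m n i j) atTop (𝓝 (m' i j)))
    (K : ℕ → ℝ → Fin N → Matrix (Fin d) (Fin d) ℝ)
    (hK : ∀ n, IsRiccatiSolution T (A n) (C n) (B n) (Q n) (R n) (m n) P (K n))
    (K' : ℝ → Fin N → Matrix (Fin d) (Fin d) ℝ)
    (hK' : IsRiccatiSolution T A' C' B' Q' R' m' P K') :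
    (∀ i, TendstoUniformlyOn
        (fun n t => (R n i)⁻¹ * (B n i)ᵀ * K n t i)
        (fun t => (R' i)⁻¹ * (B' i)ᵀ * K' t i)
        atTop (Icc (0:ℝ) T)) ∧
    (∀ t ∈ Icc (0:ℝ) T, ∀ (x : Fin d → ℝ), ∀ i,
      Tendsto (fun n => -(((R n i)⁻¹ * (B n i)ᵀ * K n t i).mulVec x))
        atTop (𝓝 (-(((R' i)⁻¹ * (B' i)ᵀ * K' t i).mulVec x)))) := by
  classical
  -- convergence of the inverses
  have hSconv : ∀ i, Tendsto (fun n => (R n i)⁻¹) atTop (𝓝 (R' i)⁻¹) := by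
    intro i
    have hdet : (R' i).det ≠ 0 := (hR' i).det_pos.ne'
    have hcont : ContinuousAt Ring.inverse (R' i).det := by
      rw [Ring.inverse_eq_inv']
      exact continuousAt_inv₀ hdet
    exact (continuousAt_matrix_inv (R' i) hcont).tendsto.comp (hRconv i)
  -- parameter tuples
  set cn : ℕ → RiccatiAux.Par d l N :=
    fun n => (A n, C n, B n, Q n, fun i => (R n i)⁻¹, m n) with hcn
  set c' : RiccatiAux.Par d l N := (A', C', B', Q', fun i => (R' i)⁻¹, m') with hc'
  have hc : Tendsto cn atTop (𝓝 c') := by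
    rw [hcn, hc']
    exact Tendsto.prodMk_nhds (tendsto_pi_nhds.mpr hAconv)
      (Tendsto.prodMk_nhds (tendsto_pi_nhds.mpr hCconv)
        (Tendsto.prodMk_nhds (tendsto_pi_nhds.mpr hBconv)
          (Tendsto.prodMk_nhds (tendsto_pi_nhds.mpr hQconv)
            (Tendsto.prodMk_nhds (tendsto_pi_nhds.mpr hSconv)
              (tendsto_pi_nhds.mpr fun i => tendsto_pi_nhds.mpr (hmconv i))))))
  -- reversed solutions
  set g : ℝ → RiccatiAux.E d N := fun t => K' (T - t) with hgdef
  set f : ℕ → ℝ → RiccatiAux.E d N := fun n t => K n (T - t) with hfdef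
  have hg' : ∀ t ∈ Icc (0:ℝ) T, HasDerivWithinAt g (RiccatiAux.vf c' (g t)) (Icc (0:ℝ) T) t :=
    fun t ht => RiccatiAux.reversed_deriv T A' C' Q' B' R' m' P K' hK' ht
  have hf' : ∀ n, ∀ t ∈ Icc (0:ℝ) T,
      HasDerivWithinAt (f n) (RiccatiAux.vf (cn n) (f n t)) (Icc (0:ℝ) T) t :=
    fun n t ht => RiccatiAux.reversed_deriv T (A n) (C n) (Q n) (B n) (R n) (m n) P (K n) (hK n) ht
  have hgc : ContinuousOn g (Icc (0:ℝ) T) := fun t ht => (hg' t ht).continuousWithinAt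
  have hfc : ∀ n, ContinuousOn (f n) (Icc (0:ℝ) T) := fun n t ht => (hf' n t ht).continuousWithinAt
  -- bound on the limit solution
  obtain ⟨M'0, hM'0⟩ := isCompact_Icc.exists_bound_of_continuousOn hgc
  set M' : ℝ := max M'0 0 with hM'def
  have hM'nonneg : 0 ≤ M' := le_max_right _ _
  have hgM : ∀ t ∈ Icc (0:ℝ) T, ‖g t‖ ≤ M' := fun t ht => (hM'0 t ht).trans (le_max_left _ _)
  -- Lipschitz constant
  obtain ⟨L, hL1, hLip⟩ := RiccatiAux.exists_lipschitzOnWith_vf c' (M' + 1)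
  have hLc : (0:ℝ) < (L : ℝ) := lt_of_lt_of_le one_pos (by exact_mod_cast hL1)
  set CC : ℝ := (Real.exp ((L:ℝ) * T) - 1) / (L:ℝ) with hCCdef
  have hexp : (1:ℝ) < Real.exp ((L:ℝ) * T) := by
    have hpos : (0:ℝ) < (L:ℝ) * T := by positivity
    have := Real.add_one_lt_exp hpos.ne'
    linarith
  have hCCpos : 0 < CC := by rw [hCCdef]; exact div_pos (by linarith) hLc
  -- initial (i.e. terminal) values agree
  have hfg0 : ∀ n, f n 0 = g 0 := by
    intro n
    funext i
    rw [hfdef, hgdef]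
    simp only [sub_zero]
    rw [(hK n).2.2 i, hK'.2.2 i]
  -- uniform convergence of the vector fields on the relevant ball
  have huc := RiccatiAux.tendstoUniformlyOn_vf hc
    (isCompact_closedBall (0 : RiccatiAux.E d N) (M' + 1))
  replace huc := Metric.tendstoUniformlyOn_iff.mp huc
  -- main uniform estimate
  have main : ∀ ε > (0:ℝ), ∀ᶠ n in atTop, ∀ t ∈ Icc (0:ℝ) T, dist (K n t) (K' t) ≤ ε := by
    intro ε hε
    set ε' : ℝ := min (1/(2*CC)) (ε/CC) with hε'def
    have hε'pos : 0 < ε' :=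
      lt_min (one_div_pos.mpr (by linarith)) (div_pos hε hCCpos)
    filter_upwards [huc ε' hε'pos] with n hn
    have hvn : ∀ x ∈ closedBall (0 : RiccatiAux.E d N) (M' + 1),
        dist (RiccatiAux.vf (cn n) x) (RiccatiAux.vf c' x) ≤ ε' := fun x hx => by
      rw [dist_comm]; exact (hn x hx).le
    have hsmall : ε' * CC ≤ 1/2 := by
      have h1 : ε' ≤ 1/(2*CC) := min_le_left _ _
      calc ε' * CC ≤ (1/(2*CC)) * CC := mul_le_mul_of_nonneg_right h1 hCCpos.le
        _ = 1/2 := by field_simp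
    have key := RiccatiAux.key_estimate hT hLc hLip (hfc n) (hf' n) hgc hg' hgM (hfg0 n)
      hε'pos hsmall hvn
    intro t ht
    have htm : T - t ∈ Icc (0:ℝ) T := ⟨by linarith [ht.2], by linarith [ht.1]⟩
    have hkey := key (T - t) htm
    have e1 : f n (T - t) = K n t := by rw [hfdef]; simp
    have e2 : g (T - t) = K' t := by rw [hgdef]; simp
    rw [e1, e2] at hkey
    calc dist (K n t) (K' t) ≤ ε' * CC := hkey
      _ ≤ (ε/CC) * CC := mul_le_mul_of_nonneg_right (min_le_right _ _) hCCpos.le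
      _ = ε := div_mul_cancel₀ ε hCCpos.ne'
  -- bound on the limit solution, componentwise
  have hK'bound : ∀ t ∈ Icc (0:ℝ) T, ∀ i, ‖K' t i‖ ≤ M' := by
    intro t ht i
    have htm : T - t ∈ Icc (0:ℝ) T := ⟨by linarith [ht.2], by linarith [ht.1]⟩
    have h1 := hgM (T - t) htm
    have e2 : g (T - t) = K' t := by rw [hgdef]; simp
    rw [e2] at h1
    exact (norm_le_pi_norm (K' t) i).trans h1
  -- Part 1: uniform convergence of the gains
  have part1 : ∀ i, TendstoUniformlyOn
      (fun n t => (R n i)⁻¹ * (B n i)ᵀ * K n t i)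
      (fun t => (R' i)⁻¹ * (B' i)ᵀ * K' t i) atTop (Icc (0:ℝ) T) := by
    intro i
    refine Metric.tendstoUniformlyOn_iff.mpr ?_
    intro ε hε
    set G' : Matrix (Fin l) (Fin d) ℝ := (R' i)⁻¹ * (B' i)ᵀ with hG'def
    have hBT : Tendsto (fun n => (B n i)ᵀ) atTop (𝓝 (B' i)ᵀ) :=
      ((continuous_id.matrix_transpose).tendsto (B' i)).comp (hBconv i)
    have hGn : Tendsto (fun n => (R n i)⁻¹ * (B n i)ᵀ) atTop (𝓝 G') := by
      have hp : Tendsto (fun n => ((R n i)⁻¹, (B n i)ᵀ)) atTop (𝓝 ((R' i)⁻¹, (B' i)ᵀ)) :=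
        (hSconv i).prodMk_nhds hBT
      have hcm : Continuous
          (fun x : Matrix (Fin l) (Fin l) ℝ × Matrix (Fin l) (Fin d) ℝ => x.1 * x.2) :=
        RiccatiAux.isBoundedBilinearMap_matmul.continuous
      have h9 := (hcm.tendsto ((R' i)⁻¹, (B' i)ᵀ)).comp hp
      exact h9
    set η : ℝ := min 1 (min ((ε/2)/(2*((d:ℝ)+1)*(M'+1))) ((ε/2)/(2*((d:ℝ)+1)*(‖G'‖+1)))) with hηdef
    have hd1 : (0:ℝ) < (d:ℝ) + 1 := by positivity
    have hM1 : (0:ℝ) < M' + 1 := by linarith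
    have hGN1 : (0:ℝ) < ‖G'‖ + 1 := by positivity
    have hηpos : 0 < η := by
      apply lt_min one_pos
      exact lt_min (div_pos (by linarith) (by positivity)) (div_pos (by linarith) (by positivity))
    have hGev : ∀ᶠ n in atTop, dist ((R n i)⁻¹ * (B n i)ᵀ) G' < η :=
      Metric.tendsto_nhds.mp hGn η hηpos
    filter_upwards [hGev, main η hηpos] with n h1 h2
    intro t ht
    set Gn : Matrix (Fin l) (Fin d) ℝ := (R n i)⁻¹ * (B n i)ᵀ with hGndef
    have e0 : ‖K' t i - K n t i‖ ≤ η := by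
      rw [← dist_eq_norm, dist_comm]
      exact (dist_le_pi_dist (K n t) (K' t) i).trans (h2 t ht)
    have eG : ‖G' - Gn‖ ≤ η := by rw [← dist_eq_norm, dist_comm]; exact h1.le
    have eK' : ‖K' t i‖ ≤ M' := hK'bound t ht i
    have hη1 : η ≤ 1 := min_le_left _ _
    have hηb1 : η ≤ (ε/2)/(2*((d:ℝ)+1)*(M'+1)) :=
      le_trans (min_le_right _ _) (min_le_left _ _)
    have hηb2 : η ≤ (ε/2)/(2*((d:ℝ)+1)*(‖G'‖+1)) :=
      le_trans (min_le_right _ _) (min_le_right _ _)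
    have eGn : ‖Gn‖ ≤ ‖G'‖ + 1 := by
      have h3 : ‖Gn‖ ≤ ‖G'‖ + ‖G' - Gn‖ := by
        calc ‖Gn‖ = ‖G' - (G' - Gn)‖ := by rw [sub_sub_cancel]
          _ ≤ ‖G'‖ + ‖G' - Gn‖ := norm_sub_le _ _
      linarith
    have hdnn : (0:ℝ) ≤ (d:ℝ) := Nat.cast_nonneg d
    have hq1 : ((d:ℝ)+1)*(M'+1)*η ≤ ε/4 := by
      calc ((d:ℝ)+1)*(M'+1)*η ≤ ((d:ℝ)+1)*(M'+1)*((ε/2)/(2*((d:ℝ)+1)*(M'+1))) := by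
            exact mul_le_mul_of_nonneg_left hηb1 (by positivity)
        _ = ε/4 := by field_simp; ring
    have hq2 : ((d:ℝ)+1)*(‖G'‖+1)*η ≤ ε/4 := by
      calc ((d:ℝ)+1)*(‖G'‖+1)*η ≤ ((d:ℝ)+1)*(‖G'‖+1)*((ε/2)/(2*((d:ℝ)+1)*(‖G'‖+1))) := by
            exact mul_le_mul_of_nonneg_left hηb2 (by positivity)
        _ = ε/4 := by field_simp; ring
    have t1 : (d:ℝ)*‖G' - Gn‖*‖K' t i‖ ≤ ((d:ℝ)+1)*(M'+1)*η := by
      have step1 : (d:ℝ)*‖G' - Gn‖*‖K' t i‖ ≤ (d:ℝ)*η*M' :=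
        mul_le_mul (mul_le_mul_of_nonneg_left eG hdnn) eK' (norm_nonneg _)
          (mul_nonneg hdnn hηpos.le)
      have eon : ((d:ℝ)+1)*(M'+1)*η - (d:ℝ)*η*M' = ((d:ℝ)+M'+1)*η := by ring
      have e2 : 0 ≤ ((d:ℝ)+M'+1)*η := mul_nonneg (by linarith) hηpos.le
      linarith
    have t2 : (d:ℝ)*‖Gn‖*‖K' t i - K n t i‖ ≤ ((d:ℝ)+1)*(‖G'‖+1)*η := by
      have step1 : (d:ℝ)*‖Gn‖*‖K' t i - K n t i‖ ≤ ((d:ℝ)*(‖G'‖+1))*η :=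
        mul_le_mul (mul_le_mul_of_nonneg_left eGn hdnn) e0 (norm_nonneg _)
          (mul_nonneg hdnn (by linarith))
      have eon2 : ((d:ℝ)+1)*(‖G'‖+1)*η - ((d:ℝ)*(‖G'‖+1))*η = (‖G'‖+1)*η := by ring
      have e2 : 0 ≤ (‖G'‖+1)*η := mul_nonneg (by linarith) hηpos.le
      linarith
    calc dist (G' * K' t i) (Gn * K n t i)
        = ‖(G' - Gn) * K' t i + Gn * (K' t i - K n t i)‖ := by
          rw [dist_eq_norm]
          congr 1
          rw [Matrix.sub_mul, Matrix.mul_sub]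
          abel
      _ ≤ ‖(G' - Gn) * K' t i‖ + ‖Gn * (K' t i - K n t i)‖ := norm_add_le _ _
      _ ≤ (d:ℝ)*‖G' - Gn‖*‖K' t i‖ + (d:ℝ)*‖Gn‖*‖K' t i - K n t i‖ :=
          add_le_add (RiccatiAux.norm_matmul_le _ _) (RiccatiAux.norm_matmul_le _ _)
      _ ≤ ε/4 + ε/4 := add_le_add (t1.trans hq1) (t2.trans hq2)
      _ < ε := by linarith
  refine ⟨part1, ?_⟩
  intro t ht x i
  have hp : Tendsto (fun n => (R n i)⁻¹ * (B n i)ᵀ * K n t i) atTop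
      (𝓝 ((R' i)⁻¹ * (B' i)ᵀ * K' t i)) := (part1 i).tendsto_at ht
  have hcont : Continuous (fun M : Matrix (Fin l) (Fin d) ℝ => M.mulVec x) :=
    continuous_id.matrix_mulVec continuous_const
  have h3 : Tendsto (fun n => ((R n i)⁻¹ * (B n i)ᵀ * K n t i).mulVec x) atTop
      (𝓝 (((R' i)⁻¹ * (B' i)ᵀ * K' t i).mulVec x)) := by
    have h4 := (hcont.tendsto ((R' i)⁻¹ * (B' i)ᵀ * K' t i)).comp hp
    exact h4
  exact h3.neg
end
end
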